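/- arXiv:1812.05453 — 7 statements merged into one kernel-verified Lean document; each statement's English description precedes it below -/
import Mathlib

section
/- Let k be an algebraically closed field and V a 2-dimensional k-vector space with basis {x, y}. For every 1-dimensional subspace R of V ⊗ V there exists g ∈ GL(V) such that (g ⊗ g)(R) is one of the following subspaces: span{x⊗x}; span{x⊗y + q·(y⊗x)} for some q ∈ k; span{x⊗x + x⊗y − y⊗x}. -/
/-!
Write a tensor as `∑ A i j • (b i ⊗ b j)`. Then `g ⊗ g` acts on the coefficient matrix by
congruence `A ↦ P * A * Pᵀ`, `P` the matrix of `g`, and the line spanned by the tensor only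
depends on `A` up to a nonzero scalar. So it suffices to bring every nonzero `2 × 2` matrix to a
normal form by congruence and scaling. Over an algebraically closed field the binary quadratic
form `v ↦ v A vᵀ` has a nonzero zero; taking it as first basis vector gives `A 0 0 = 0`. If then
`A 0 1 + A 1 0 ≠ 0`, a second zero of the form kills `A 1 1` as well, leaving `!![0, 1; q, 0]` up
to scaling; otherwise `A` is antisymmetric off the diagonal and a swap and rescaling of the basis
give `!![1, 0; 0, 0]`, `!![1, 1; -1, 0]` or `!![0, 1; -1, 0]`.
-/

open scoped TensorProduct Matrix

namespace Matrix

section ToTensor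

variable {R M n : Type*} [CommRing R] [AddCommGroup M] [Module R M] [Fintype n]

noncomputable def toTensor (b : Module.Basis n R M) (A : Matrix n n R) : M ⊗[R] M :=
  ∑ i, ∑ j, A i j • (b i ⊗ₜ[R] b j)

theorem toTensor_surjective (b : Module.Basis n R M) : Function.Surjective (toTensor b) := by
  intro t
  refine ⟨of fun i j => (b.tensorProduct b).repr t (i, j), ?_⟩
  nth_rewrite 2 [← (b.tensorProduct b).sum_repr t]
  simp only [toTensor, Fintype.sum_prod_type, Module.Basis.tensorProduct_apply, of_apply]

theorem toTensor_zero (b : Module.Basis n R M) : toTensor b 0 = 0 := by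
  simp [toTensor]

theorem toTensor_smul (b : Module.Basis n R M) (c : R) (A : Matrix n n R) :
    toTensor b (c • A) = c • toTensor b A := by
  simp [toTensor, Finset.smul_sum, smul_smul]

theorem toTensor_fin_two (b : Module.Basis (Fin 2) R M) (a₀₀ a₀₁ a₁₀ a₁₁ : R) :
    toTensor b !![a₀₀, a₀₁; a₁₀, a₁₁] = a₀₀ • (b 0 ⊗ₜ[R] b 0) + a₀₁ • (b 0 ⊗ₜ[R] b 1) +
      a₁₀ • (b 1 ⊗ₜ[R] b 0) + a₁₁ • (b 1 ⊗ₜ[R] b 1) := by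
  simp [toTensor, Fin.sum_univ_two, add_assoc]

variable [DecidableEq n]

theorem map_toLin_toTensor (b : Module.Basis n R M) (P A : Matrix n n R) :
    TensorProduct.map (toLin b b P) (toLin b b P) (toTensor b A) = toTensor b (P * A * Pᵀ) := by
  simp only [toTensor, map_sum, map_smul, TensorProduct.map_tmul, toLin_self,
    TensorProduct.sum_tmul, TensorProduct.tmul_sum, TensorProduct.smul_tmul_smul, Finset.smul_sum,
    smul_smul, mul_apply, transpose_apply, Finset.sum_smul, Finset.sum_mul]
  -- bring both quadruple sums into the order `∑ k, ∑ i, ∑ j, ∑ l, _ • (b k ⊗ b l)`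
  conv_lhs => enter [2, i, 2, j]; rw [Finset.sum_comm]
  conv_lhs => enter [2, i]; rw [Finset.sum_comm]
  rw [Finset.sum_comm]
  conv_rhs => enter [2, k, 2, l]; rw [Finset.sum_comm]
  conv_rhs => enter [2, k]; rw [Finset.sum_comm]
  conv_rhs => enter [2, k, 2, i]; rw [Finset.sum_comm]
  refine Finset.sum_congr rfl fun _ _ => Finset.sum_congr rfl fun _ _ =>
    Finset.sum_congr rfl fun _ _ => Finset.sum_congr rfl fun _ _ => ?_
  congr 1
  ring

theorem toLinearEquiv_toLinearMap (b : Module.Basis n R M) (P : Matrix n n R)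
    (hP : IsUnit P.det) : (toLinearEquiv b P hP : M →ₗ[R] M) = toLin b b P :=
  rfl

end ToTensor

section ProjCongr

variable {n k : Type*} [Fintype n] [DecidableEq n] [Field k]

def ProjCongr (A B : Matrix n n k) : Prop :=
  ∃ P : Matrix n n k, IsUnit P.det ∧ ∃ μ : k, μ ≠ 0 ∧ P * A * Pᵀ = μ • B

theorem ProjCongr.trans {A B C : Matrix n n k} (hAB : ProjCongr A B) (hBC : ProjCongr B C) :
    ProjCongr A C := by
  obtain ⟨P, hP, μ, hμ, hPA⟩ := hAB
  obtain ⟨Q, hQ, ν, hν, hQB⟩ := hBC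
  refine ⟨Q * P, by simpa using hQ.mul hP, μ * ν, mul_ne_zero hμ hν, ?_⟩
  calc Q * P * A * (Q * P)ᵀ = Q * (P * A * Pᵀ) * Qᵀ := by
        simp only [transpose_mul, Matrix.mul_assoc]
    _ = (μ * ν) • C := by rw [hPA, Matrix.mul_smul, Matrix.smul_mul, hQB, smul_smul]

theorem projCongr_of_eq_smul {A B : Matrix n n k} {μ : k} (hμ : μ ≠ 0) (h : A = μ • B) :
    ProjCongr A B :=
  ⟨1, by simp, μ, hμ, by simpa using h⟩

end ProjCongr

variable {k : Type*} [Field k]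

theorem mul_mul_transpose_fin_two (p q r s a b c d : k) :
    !![p, q; r, s] * !![a, b; c, d] * !![p, q; r, s]ᵀ =
      !![p * (a * p + b * q) + q * (c * p + d * q), p * (a * r + b * s) + q * (c * r + d * s);
        r * (a * p + b * q) + s * (c * p + d * q), r * (a * r + b * s) + s * (c * r + d * s)] := by
  ext i j
  fin_cases i <;> fin_cases j <;> simp [mul_apply, Fin.sum_univ_two] <;> ring

theorem projCongr_fin_two {p q r s a b c d a' b' c' d' : k} (hdet : p * s - q * r ≠ 0)
    (ha : p * (a * p + b * q) + q * (c * p + d * q) = a')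
    (hb : p * (a * r + b * s) + q * (c * r + d * s) = b')
    (hc : r * (a * p + b * q) + s * (c * p + d * q) = c')
    (hd : r * (a * r + b * s) + s * (c * r + d * s) = d') :
    ProjCongr !![a, b; c, d] !![a', b'; c', d'] :=
  ⟨!![p, q; r, s], by simpa using hdet, 1, one_ne_zero,
    by rw [mul_mul_transpose_fin_two, one_smul, ha, hb, hc, hd]⟩

def IsNormalForm (N : Matrix (Fin 2) (Fin 2) k) : Prop :=
  N = !![1, 0; 0, 0] ∨ (∃ q, N = !![0, 1; q, 0]) ∨ N = !![1, 1; -1, 0]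

def HasNormalForm (A : Matrix (Fin 2) (Fin 2) k) : Prop :=
  ∃ N, IsNormalForm N ∧ ProjCongr A N

theorem HasNormalForm.of_projCongr {A B : Matrix (Fin 2) (Fin 2) k} (hAB : ProjCongr A B)
    (hB : HasNormalForm B) : HasNormalForm A :=
  let ⟨N, hN, hBN⟩ := hB
  ⟨N, hN, hAB.trans hBN⟩

theorem hasNormalForm_of_eq_smul {A N : Matrix (Fin 2) (Fin 2) k} {μ : k} (hμ : μ ≠ 0)
    (hN : IsNormalForm N) (h : A = μ • N) : HasNormalForm A :=
  ⟨N, hN, projCongr_of_eq_smul hμ h⟩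

theorem hasNormalForm_offDiag {b c : k} (h : b ≠ 0 ∨ c ≠ 0) : HasNormalForm !![0, b; c, 0] := by
  have of_ne_zero : ∀ {b c : k}, b ≠ 0 → HasNormalForm !![0, b; c, 0] := fun {b c} hb =>
    hasNormalForm_of_eq_smul hb (.inr (.inl ⟨c / b, rfl⟩)) (by
      ext i j
      fin_cases i <;> fin_cases j <;> simp [mul_div_cancel₀ _ hb])
  rcases h with hb | hc
  · exact of_ne_zero hb
  · exact .of_projCongr (projCongr_fin_two (p := (0 : k)) (q := 1) (r := 1) (s := 0) (by simp)
      (by ring) (by ring) (by ring) (by ring)) (of_ne_zero hc)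

theorem hasNormalForm_of_apply_zero_zero {b c d : k} (h : !![0, b; c, d] ≠ 0) :
    HasNormalForm !![0, b; c, d] := by
  by_cases hbc : b + c = 0
  · obtain rfl : c = -b := by linear_combination hbc
    by_cases hd : d = 0
    · subst hd
      have hb : b ≠ 0 := by
        rintro rfl
        exact h (by ext i j; fin_cases i <;> fin_cases j <;> simp)
      exact hasNormalForm_offDiag (.inl hb)
    by_cases hb : b = 0
    · subst hb
      refine .of_projCongr (B := !![d, 0; 0, 0]) (projCongr_fin_two (p := 0) (q := 1) (r := 1)
        (s := 0) (by simp) (by ring) (by ring) (by ring) (by ring))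
        (hasNormalForm_of_eq_smul hd (.inl rfl) ?_)
      ext i j
      fin_cases i <;> fin_cases j <;> simp
    · refine .of_projCongr (B := !![d, d; -d, 0]) (projCongr_fin_two (p := 0) (q := 1)
        (r := -d / b) (s := 0) (by simp [hd, hb]) (by ring) (by field_simp; ring)
        (by field_simp; ring) (by ring)) (hasNormalForm_of_eq_smul hd (.inr (.inr rfl)) ?_)
      ext i j
      fin_cases i <;> fin_cases j <;> simp
  · -- `(s, 1)` with `s = -d / (b + c)` is a zero of the quadratic form `(b + c) x y + d y²`
    exact .of_projCongr (B := !![0, b; c, 0]) (projCongr_fin_two (p := 1) (q := 0)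
      (r := -d / (b + c)) (s := 1) (by simp) (by ring) (by ring) (by ring) (by field_simp; ring))
      (hasNormalForm_offDiag (by by_contra! h0; exact hbc (by rw [h0.1, h0.2, add_zero])))

theorem exists_isUnit_det_mul_mul_transpose_apply_zero_zero [IsAlgClosed k]
    (A : Matrix (Fin 2) (Fin 2) k) :
    ∃ P : Matrix (Fin 2) (Fin 2) k, IsUnit P.det ∧ (P * A * Pᵀ) 0 0 = 0 := by
  by_cases ha : A 0 0 = 0
  · exact ⟨1, by simp, by simpa using ha⟩
  open Polynomial in
  obtain ⟨t, ht⟩ := IsAlgClosed.exists_root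
    (C (A 0 0) * X ^ 2 + C (A 0 1 + A 1 0) * X + C (A 1 1))
    (by rw [degree_quadratic ha]; norm_num)
  refine ⟨!![t, 1; 1, 0], by simp, ?_⟩
  rw [eta_fin_two A, mul_mul_transpose_fin_two]
  simp only [IsRoot, eval_add, eval_mul, eval_pow, eval_C, eval_X] at ht
  simp only [of_apply, cons_val', cons_val_zero, empty_val', cons_val_fin_one]
  linear_combination ht

theorem hasNormalForm [IsAlgClosed k] {A : Matrix (Fin 2) (Fin 2) k} (hA : A ≠ 0) :
    HasNormalForm A := by
  obtain ⟨P, hP, hP00⟩ := exists_isUnit_det_mul_mul_transpose_apply_zero_zero A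
  have hPA : P * A * Pᵀ ≠ 0 := by
    rwa [Ne, ((isUnit_iff_isUnit_det _).mpr (by simpa using hP)).mul_left_eq_zero,
      ((isUnit_iff_isUnit_det P).mpr hP).mul_right_eq_zero]
  refine .of_projCongr ⟨P, hP, 1, one_ne_zero, (one_smul k _).symm⟩ ?_
  rw [eta_fin_two (P * A * Pᵀ), hP00] at hPA ⊢
  exact hasNormalForm_of_apply_zero_zero hPA

end Matrix

theorem Submodule.exists_ne_zero_eq_span_singleton_of_finrank_eq_one {K V : Type*}
    [DivisionRing K] [AddCommGroup V] [Module K V] {R : Submodule K V}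
    (hR : Module.finrank K R = 1) : ∃ v ≠ 0, R = K ∙ v := by
  have := Module.finite_of_finrank_eq_succ hR
  obtain ⟨v, rfl⟩ := (R.finrank_le_one_iff_isPrincipal.mp hR.le).principal
  refine ⟨v, ?_, rfl⟩
  rintro rfl
  rw [span_zero_singleton, finrank_bot] at hR
  exact zero_ne_one hR

open Matrix in
/-- Let `k` be an algebraically closed field and `V` a 2-dimensional
`k`-vector space with basis `{x, y}` (here `x = b 0`, `y = b 1`).  Every 1-dimensional
subspace `R` of `V ⊗ V` can be moved by some `g ∈ GL(V)` (acting as `g ⊗ g`) onto one of: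
`span{x⊗x}`, `span{x⊗y + q·(y⊗x)}` for some `q ∈ k`, or `span{x⊗x + x⊗y − y⊗x}`. -/
theorem stmt0 (k V : Type) [Field k] [IsAlgClosed k] [AddCommGroup V] [Module k V]
    (b : Module.Basis (Fin 2) k V) (R : Submodule k (V ⊗[k] V)) (hR : Module.finrank k R = 1) :
    ∃ g : V ≃ₗ[k] V,
      Submodule.map (TensorProduct.map g.toLinearMap g.toLinearMap) R =
          Submodule.span k {b 0 ⊗ₜ[k] b 0} ∨
      (∃ q : k, Submodule.map (TensorProduct.map g.toLinearMap g.toLinearMap) R =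
          Submodule.span k {b 0 ⊗ₜ[k] b 1 + q • (b 1 ⊗ₜ[k] b 0)}) ∨
      Submodule.map (TensorProduct.map g.toLinearMap g.toLinearMap) R =
          Submodule.span k {b 0 ⊗ₜ[k] b 0 + b 0 ⊗ₜ[k] b 1 - b 1 ⊗ₜ[k] b 0} := by
  obtain ⟨v, hv, rfl⟩ := Submodule.exists_ne_zero_eq_span_singleton_of_finrank_eq_one hR
  obtain ⟨A, rfl⟩ := toTensor_surjective b v
  have hA : A ≠ 0 := by
    rintro rfl
    exact hv (toTensor_zero b)
  obtain ⟨N, hN, P, hP, μ, hμ, hPA⟩ := hasNormalForm hA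
  refine ⟨toLinearEquiv b P hP, ?_⟩
  have hmap : Submodule.map (TensorProduct.map (toLin b b P) (toLin b b P)) (k ∙ toTensor b A) =
      k ∙ toTensor b N := by
    rw [Submodule.map_span, Set.image_singleton, map_toLin_toTensor, hPA, toTensor_smul,
      Submodule.span_singleton_smul_eq hμ.isUnit]
  rw [toLinearEquiv_toLinearMap, hmap]
  rcases hN with rfl | ⟨q, rfl⟩ | rfl
  · left; simp [toTensor_fin_two]
  · right; left; exact ⟨q, by simp [toTensor_fin_two]⟩
  · right; right; simp [toTensor_fin_two, sub_eq_add_neg]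
end

section
/- Let k be an algebraically closed field and V a 2-dimensional k-vector space with basis {x, y}. For every 2-dimensional subspace R of V ⊗ V there exists g ∈ GL(V) such that (g ⊗ g)(R) is one of the following subspaces: span{x⊗y, y⊗x}; span{x⊗x, y⊗y}; span{x⊗x, y⊗x}; span{x⊗x, x⊗y − q·(y⊗x)} for some q ∈ k; span{x⊗y, x⊗x − y⊗y}; span{x⊗y, x⊗x − y⊗x − q·(y⊗y)} for some q ∈ k. -/
/-!
Identify `V ⊗ V` with `2 × 2` matrices through the basis `b ⊗ b`, and write `x = b 0`, `y = b 1`.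
Then `g ⊗ g` acts by congruence `M ↦ g M gᵀ`, which multiplies the determinant by `(det g)²`, and
the rank-one tensors `u ⊗ v` are the matrices of determinant zero. On the plane `R` the
determinant is a binary quadratic form, so over an algebraically closed field
`R = span {u ⊗ v, B}`. With `m` the polarisation of the determinant at `(u ⊗ v, B)` and
`d = det B`, one has `det (s • u ⊗ v + B) = s m + d`, and:
* if `m ≠ 0`, `R` is spanned by two rank-one tensors `u ⊗ v`, `w ⊗ z` with `u, w` and `v, z`
  independent; the remaining linear relations among `u, v, w, z` decide between
  `span {x⊗y, y⊗x}`, `span {x⊗x, y⊗y}` and `span {x⊗y, x⊗x − y⊗x − q y⊗y}`;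
* if `m = d = 0`, every element of `R` has rank at most one, so `R` has a common left or right
  factor: `span {x⊗x, x⊗y}` or `span {x⊗x, y⊗x}`;
* if `m = 0 ≠ d`, one gets `span {x⊗x, x⊗y − q y⊗x}` when `u, v` are dependent and otherwise,
  after rescaling `y` by a square root, `span {x⊗y, x⊗x − y⊗y}`.
-/

open scoped TensorProduct
open Module Submodule TensorProduct

noncomputable section

namespace QuadraticRelations

variable {k V : Type*} [Field k] [AddCommGroup V] [Module k V] (b : Basis (Fin 2) k V)

section Span

variable {M N : Type*} [AddCommGroup M] [Module k M] [AddCommGroup N] [Module k N]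

lemma span_pair_smul {x y : M} {c d : k} (hc : c ≠ 0) (hd : d ≠ 0) :
    span k {c • x, d • y} = span k {x, y} := by
  rw [span_insert, span_insert, span_singleton_smul_eq hc.isUnit,
    span_singleton_smul_eq hd.isUnit]

lemma span_pair_smul_add_smul (x y : M) (a : k) {c : k} (hc : c ≠ 0) :
    span k {x, a • x + c • y} = span k {x, y} := by
  refine le_antisymm (span_le.2 ?_) (span_le.2 ?_) <;>
    rintro _ (rfl | rfl) <;> rw [SetLike.mem_coe, mem_span_pair]
  exacts [⟨1, 0, by module⟩, ⟨a, c, rfl⟩, ⟨1, 0, by module⟩,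
    ⟨-(a / c), c⁻¹, by match_scalars <;> field_simp; ring⟩]

lemma span_pair_smul_left {x y : M} {c : k} (hc : c ≠ 0) :
    span k {c • x, y} = span k {x, y} := by
  simpa using span_pair_smul (x := x) (y := y) hc one_ne_zero

lemma ne_smul_of_finrank_span_pair_eq_two {x y : M} (h : finrank k (span k {x, y}) = 2) (c : k) :
    y ≠ c • x := by
  rintro rfl
  have hle : span k {x, c • x} = k ∙ x := by
    rw [span_insert, sup_eq_left]
    exact span_singleton_smul_le _ _ _
  have := finrank_span_le_card (R := k) ({x} : Set M)
  rw [← hle, h] at this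
  simp at this

lemma ne_zero_of_finrank_span_pair_eq_two {x y : M} (h : finrank k (span k {x, y}) = 2) :
    x ≠ 0 := by
  rw [Set.pair_comm] at h
  simpa using ne_smul_of_finrank_span_pair_eq_two h 0

lemma exists_eq_span_pair_of_finrank_eq_two {R : Submodule k M} (hR : finrank k R = 2) :
    ∃ x y : M, R = span k {x, y} := by
  have : Module.Finite k R := Module.finite_of_finrank_eq_succ hR
  let e := Module.finBasisOfFinrankEq k R hR
  refine ⟨e 0, e 1, ?_⟩
  have h := congrArg (Submodule.map R.subtype) e.span_eq
  rw [map_span, Submodule.map_top, range_subtype] at h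
  refine h.symm.trans (congrArg (span k) (Set.ext fun x => ?_))
  simp [Fin.exists_fin_two, eq_comm]

lemma span_tmul_pair_left (x : M) {p q p' q' : N} (h : span k {p, q} = span k {p', q'}) :
    span k {x ⊗ₜ[k] p, x ⊗ₜ[k] q} = span k {x ⊗ₜ[k] p', x ⊗ₜ[k] q'} := by
  simpa [map_span, Set.image_pair] using congrArg (map (TensorProduct.mk k M N x)) h

lemma span_tmul_pair_right (y : N) {p q p' q' : M} (h : span k {p, q} = span k {p', q'}) :
    span k {p ⊗ₜ[k] y, q ⊗ₜ[k] y} = span k {p' ⊗ₜ[k] y, q' ⊗ₜ[k] y} := by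
  simpa [map_span, Set.image_pair] using congrArg (map ((TensorProduct.mk k M N).flip y)) h

end Span

def diagEquiv {ι : Type*} (e : Basis ι k V) (d : ι → kˣ) : V ≃ₗ[k] V :=
  e.equiv (e.unitsSMul d) (Equiv.refl _)

@[simp] lemma diagEquiv_apply {ι : Type*} (e : Basis ι k V) (d : ι → kˣ) (i : ι) :
    diagEquiv e d (e i) = (d i : k) • e i := by
  simp [diagEquiv, Basis.unitsSMul_apply, Units.smul_def]

lemma repr_smul_add_repr_smul (p : V) : b.repr p 0 • b 0 + b.repr p 1 • b 1 = p := by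
  simpa only [Fin.sum_univ_two] using b.sum_repr p

def wedge (p q : V) : k := b.det ![p, q]

lemma wedge_apply (p q : V) :
    wedge b p q = b.repr p 0 * b.repr q 1 - b.repr p 1 * b.repr q 0 := by
  simp only [wedge, Basis.det_apply, Matrix.det_fin_two, Basis.toMatrix_apply,
    Matrix.cons_val_zero, Matrix.cons_val_one, Matrix.cons_val_fin_one]
  ring

lemma wedge_map (f : V →ₗ[k] V) (p q : V) :
    wedge b (f p) (f q) = LinearMap.det f * wedge b p q := by
  rw [wedge, wedge, ← b.det_comp]
  congr 1
  ext i
  fin_cases i <;> rfl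

@[simp] lemma wedge_basis : wedge b (b 0) (b 1) = 1 := by
  simp [wedge_apply]

lemma wedge_basis_zero_left (p : V) : wedge b (b 0) p = b.repr p 1 := by
  simp [wedge_apply]

lemma wedge_basis_one_right (p : V) : wedge b p (b 1) = b.repr p 0 := by
  simp [wedge_apply]

lemma wedge_smul_right (c : k) (p q : V) : wedge b p (c • q) = c * wedge b p q := by
  simp only [wedge_apply, map_smul, Finsupp.smul_apply, smul_eq_mul]; ring

lemma wedge_swap (p q : V) : wedge b q p = -wedge b p q := by
  simp only [wedge_apply]; ring

lemma wedge_mul_wedge (u v w z : V) :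
    wedge b u w * wedge b v z = wedge b u v * wedge b w z - wedge b u z * wedge b w v := by
  simp only [wedge_apply]; ring

lemma wedge_eq_zero_iff {p q : V} (hp : p ≠ 0) : wedge b p q = 0 ↔ ∃ c : k, q = c • p := by
  refine ⟨fun h => ?_, fun ⟨c, hc⟩ => by rw [hc, wedge_smul_right, wedge_apply]; ring⟩
  rw [wedge_apply] at h
  have hp' : b.repr p 0 ≠ 0 ∨ b.repr p 1 ≠ 0 := by
    by_contra! h0
    exact hp (b.ext_elem fun i => by fin_cases i <;> simp [h0])
  rcases hp' with h0 | h1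
  · refine ⟨b.repr q 0 / b.repr p 0, b.ext_elem fun i => ?_⟩
    fin_cases i <;>
      simp only [Fin.zero_eta, Fin.mk_one, map_smul, Finsupp.coe_smul, Pi.smul_apply,
        smul_eq_mul] <;>
      field_simp; linear_combination h
  · refine ⟨b.repr q 1 / b.repr p 1, b.ext_elem fun i => ?_⟩
    fin_cases i <;>
      simp only [Fin.zero_eta, Fin.mk_one, map_smul, Finsupp.coe_smul, Pi.smul_apply,
        smul_eq_mul] <;>
      field_simp; linear_combination -h

lemma wedge_map_ne_zero (g : V ≃ₗ[k] V) {p q : V} (h : wedge b p q ≠ 0) :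
    wedge b (g p) (g q) ≠ 0 := by
  rw [← LinearEquiv.coe_coe, wedge_map]
  exact mul_ne_zero g.isUnit_det'.ne_zero h

lemma ne_zero_left_of_wedge_ne_zero {p q : V} (h : wedge b p q ≠ 0) : p ≠ 0 := by
  rintro rfl
  simp [wedge_apply] at h

lemma ne_zero_right_of_wedge_ne_zero {p q : V} (h : wedge b p q ≠ 0) : q ≠ 0 := by
  rintro rfl
  simp [wedge_apply] at h

lemma exists_wedge_ne_zero {p : V} (hp : p ≠ 0) : ∃ q : V, wedge b p q ≠ 0 := by
  by_contra! h
  have h0 := h (b 0)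
  have h1 := h (b 1)
  simp only [wedge_apply, Basis.repr_self, Finsupp.single_apply] at h0 h1
  exact hp (b.ext_elem fun i => by fin_cases i <;> simp_all)

lemma span_pair_eq_top_of_wedge_ne_zero {p q : V} (h : wedge b p q ≠ 0) :
    span k {p, q} = ⊤ := by
  have := (b.is_basis_iff_det.2 (Ne.isUnit h)).2
  rwa [Matrix.range_cons_cons_empty] at this

def equivOfWedgeNeZero {p q : V} (h : wedge b p q ≠ 0) : V ≃ₗ[k] V :=
  have hpq := b.is_basis_iff_det.2 (Ne.isUnit h)
  (Basis.mk hpq.1 hpq.2.ge).equiv b (Equiv.refl _)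

@[simp] lemma equivOfWedgeNeZero_apply_left {p q : V} (h : wedge b p q ≠ 0) :
    equivOfWedgeNeZero b h p = b 0 := by
  have hpq := b.is_basis_iff_det.2 (Ne.isUnit h)
  have key := (Basis.mk hpq.1 hpq.2.ge).equiv_apply 0 b (Equiv.refl _)
  rw [Basis.mk_apply, Equiv.refl_apply] at key
  exact key

@[simp] lemma equivOfWedgeNeZero_apply_right {p q : V} (h : wedge b p q ≠ 0) :
    equivOfWedgeNeZero b h q = b 1 := by
  have hpq := b.is_basis_iff_det.2 (Ne.isUnit h)
  have key := (Basis.mk hpq.1 hpq.2.ge).equiv_apply 1 b (Equiv.refl _)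
  rw [Basis.mk_apply, Equiv.refl_apply] at key
  exact key

def coeffMatrix (X : V ⊗[k] V) : Matrix (Fin 2) (Fin 2) k :=
  Matrix.of fun i j => (b.tensorProduct b).repr X (i, j)

lemma eq_sum_coeffMatrix_smul_tmul (X : V ⊗[k] V) :
    X = coeffMatrix b X 0 0 • b 0 ⊗ₜ b 0 + coeffMatrix b X 0 1 • b 0 ⊗ₜ b 1 +
      coeffMatrix b X 1 0 • b 1 ⊗ₜ b 0 + coeffMatrix b X 1 1 • b 1 ⊗ₜ b 1 := by
  refine (b.tensorProduct b).ext_elem fun ⟨i, j⟩ => ?_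
  fin_cases i <;> fin_cases j <;>
    simp [coeffMatrix, Basis.tensorProduct_repr_tmul_apply]

def tensorDet (X : V ⊗[k] V) : k := (coeffMatrix b X).det

def tensorPolar (X Y : V ⊗[k] V) : k := tensorDet b (X + Y) - tensorDet b X - tensorDet b Y

def tensorRow (X : V ⊗[k] V) (i : Fin 2) : V := ∑ j, coeffMatrix b X i j • b j

lemma sum_tmul_tensorRow (X : V ⊗[k] V) :
    b 0 ⊗ₜ tensorRow b X 0 + b 1 ⊗ₜ tensorRow b X 1 = X := by
  refine (b.tensorProduct b).ext_elem fun ⟨i, j⟩ => ?_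
  fin_cases i <;> fin_cases j <;>
    simp [tensorRow, coeffMatrix, Basis.tensorProduct_repr_tmul_apply]

lemma tensorDet_tmul_add_tmul (u v w z : V) :
    tensorDet b (u ⊗ₜ v + w ⊗ₜ z) = wedge b u w * wedge b v z := by
  simp only [tensorDet, coeffMatrix, Matrix.det_fin_two, Matrix.of_apply, map_add, Finsupp.coe_add,
    Pi.add_apply, Basis.tensorProduct_repr_tmul_apply, smul_eq_mul, wedge_apply]
  ring

lemma tensorDet_tmul (u v : V) : tensorDet b (u ⊗ₜ v) = 0 := by
  simpa [wedge_apply] using tensorDet_tmul_add_tmul b u v 0 0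

lemma tensorDet_eq_wedge_tensorRow (X : V ⊗[k] V) :
    tensorDet b X = wedge b (tensorRow b X 0) (tensorRow b X 1) := by
  conv_lhs => rw [← sum_tmul_tensorRow b X]
  rw [tensorDet_tmul_add_tmul, wedge_basis, one_mul]

lemma tensorDet_map (f : V →ₗ[k] V) (X : V ⊗[k] V) :
    tensorDet b (map f f X) = LinearMap.det f ^ 2 * tensorDet b X := by
  conv_lhs => rw [← sum_tmul_tensorRow b X]
  rw [map_add, map_tmul, map_tmul, tensorDet_tmul_add_tmul, wedge_map, wedge_map, wedge_basis,
    tensorDet_eq_wedge_tensorRow]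
  ring

lemma tensorPolar_map (f : V →ₗ[k] V) (X Y : V ⊗[k] V) :
    tensorPolar b (map f f X) (map f f Y) = LinearMap.det f ^ 2 * tensorPolar b X Y := by
  simp only [tensorPolar, ← map_add, tensorDet_map]
  ring

lemma tensorPolar_smul_left (c : k) (X Y : V ⊗[k] V) :
    tensorPolar b (c • X) Y = c * tensorPolar b X Y := by
  simp only [tensorPolar, tensorDet, coeffMatrix, Matrix.det_fin_two, Matrix.of_apply, map_add,
    map_smul, Finsupp.coe_add, Finsupp.coe_smul, Pi.add_apply, Pi.smul_apply, smul_eq_mul]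
  ring

lemma tensorDet_smul_add (s : k) (X Y : V ⊗[k] V) :
    tensorDet b (s • X + Y) = s ^ 2 * tensorDet b X + s * tensorPolar b X Y + tensorDet b Y := by
  simp only [tensorPolar, tensorDet, coeffMatrix, Matrix.det_fin_two, Matrix.of_apply, map_add,
    map_smul, Finsupp.coe_add, Finsupp.coe_smul, Pi.add_apply, Pi.smul_apply, smul_eq_mul]
  ring

lemma exists_eq_tmul_of_tensorDet_eq_zero {X : V ⊗[k] V} (h : tensorDet b X = 0) :
    ∃ u v : V, X = u ⊗ₜ v := by
  rw [tensorDet_eq_wedge_tensorRow] at h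
  by_cases h0 : tensorRow b X 0 = 0
  · refine ⟨b 1, tensorRow b X 1, ?_⟩
    conv_lhs => rw [← sum_tmul_tensorRow b X, h0, tmul_zero, zero_add]
  · obtain ⟨c, hc⟩ := (wedge_eq_zero_iff b h0).1 h
    refine ⟨b 0 + c • b 1, tensorRow b X 0, ?_⟩
    conv_lhs => rw [← sum_tmul_tensorRow b X, hc]
    rw [add_tmul, smul_tmul, tmul_smul]

lemma tensorPolar_basis_zero_tmul_basis_zero (B : V ⊗[k] V) :
    tensorPolar b (b 0 ⊗ₜ b 0) B = coeffMatrix b B 1 1 := by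
  simp [tensorPolar, tensorDet, coeffMatrix, Matrix.det_fin_two,
    Basis.tensorProduct_repr_tmul_apply, add_mul]

lemma tensorPolar_basis_zero_tmul_basis_one (B : V ⊗[k] V) :
    tensorPolar b (b 0 ⊗ₜ b 1) B = -coeffMatrix b B 1 0 := by
  simp [tensorPolar, tensorDet, coeffMatrix, Matrix.det_fin_two,
    Basis.tensorProduct_repr_tmul_apply, add_mul]

def IsNormalForm (S : Submodule k (V ⊗[k] V)) : Prop :=
  S = span k {b 0 ⊗ₜ[k] b 1, b 1 ⊗ₜ[k] b 0} ∨
  S = span k {b 0 ⊗ₜ[k] b 0, b 1 ⊗ₜ[k] b 1} ∨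
  S = span k {b 0 ⊗ₜ[k] b 0, b 1 ⊗ₜ[k] b 0} ∨
  (∃ q : k, S = span k {b 0 ⊗ₜ[k] b 0, b 0 ⊗ₜ[k] b 1 - q • (b 1 ⊗ₜ[k] b 0)}) ∨
  S = span k {b 0 ⊗ₜ[k] b 1, b 0 ⊗ₜ[k] b 0 - b 1 ⊗ₜ[k] b 1} ∨
  (∃ q : k, S = span k {b 0 ⊗ₜ[k] b 1,
    b 0 ⊗ₜ[k] b 0 - b 1 ⊗ₜ[k] b 0 - q • (b 1 ⊗ₜ[k] b 1)})

def HasNormalForm (S : Submodule k (V ⊗[k] V)) : Prop :=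
  ∃ g : V ≃ₗ[k] V, IsNormalForm b (S.map (TensorProduct.map g.toLinearMap g.toLinearMap))

variable {b}

lemma IsNormalForm.hasNormalForm {S : Submodule k (V ⊗[k] V)} (h : IsNormalForm b S) :
    HasNormalForm b S :=
  ⟨LinearEquiv.refl k V, by simpa using h⟩

lemma HasNormalForm.of_map {S : Submodule k (V ⊗[k] V)} (g : V ≃ₗ[k] V)
    (h : HasNormalForm b (S.map (TensorProduct.map g.toLinearMap g.toLinearMap))) :
    HasNormalForm b S := by
  obtain ⟨g', hg'⟩ := h
  refine ⟨g ≪≫ₗ g', ?_⟩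
  rwa [LinearEquiv.coe_trans, TensorProduct.map_comp, Submodule.map_comp]

variable (b)

lemma map_span_tmul_pair (g : V ≃ₗ[k] V) (u v w z : V) :
    (span k {u ⊗ₜ[k] v, w ⊗ₜ[k] z}).map (TensorProduct.map g.toLinearMap g.toLinearMap) =
      span k {g u ⊗ₜ[k] g v, g w ⊗ₜ[k] g z} := by
  simp [map_span, Set.image_pair]

lemma hasNormalForm_span_tmul_left {u v z : V} (hu : u ≠ 0) (hvz : wedge b v z ≠ 0) :
    HasNormalForm b (span k {u ⊗ₜ[k] v, u ⊗ₜ[k] z}) := by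
  obtain ⟨u', hu'⟩ := exists_wedge_ne_zero b hu
  set g := equivOfWedgeNeZero b hu'
  refine .of_map g (IsNormalForm.hasNormalForm (Or.inr (Or.inr (Or.inr (Or.inl ⟨0, ?_⟩)))))
  rw [map_span_tmul_pair, equivOfWedgeNeZero_apply_left, zero_smul, sub_zero]
  refine span_tmul_pair_left _ ?_
  rw [span_pair_eq_top_of_wedge_ne_zero b (wedge_map_ne_zero b g hvz),
    span_pair_eq_top_of_wedge_ne_zero b (wedge_basis b ▸ one_ne_zero)]

lemma hasNormalForm_span_tmul_right {u v w : V} (hv : v ≠ 0) (huw : wedge b u w ≠ 0) :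
    HasNormalForm b (span k {u ⊗ₜ[k] v, w ⊗ₜ[k] v}) := by
  obtain ⟨v', hv'⟩ := exists_wedge_ne_zero b hv
  set g := equivOfWedgeNeZero b hv'
  refine .of_map g (IsNormalForm.hasNormalForm (Or.inr (Or.inr (Or.inl ?_))))
  rw [map_span_tmul_pair, equivOfWedgeNeZero_apply_left]
  refine span_tmul_pair_right _ ?_
  rw [span_pair_eq_top_of_wedge_ne_zero b (wedge_map_ne_zero b g huw),
    span_pair_eq_top_of_wedge_ne_zero b (wedge_basis b ▸ one_ne_zero)]

lemma hasNormalForm_span_tmul_tmul_of_wedge_mul_eq_zero {u v w z : V}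
    (hR : finrank k (span k {u ⊗ₜ[k] v, w ⊗ₜ[k] z}) = 2)
    (h : wedge b u w * wedge b v z = 0) :
    HasNormalForm b (span k {u ⊗ₜ[k] v, w ⊗ₜ[k] z}) := by
  have huv := ne_zero_of_finrank_span_pair_eq_two hR
  have hu : u ≠ 0 := by rintro rfl; simp at huv
  have hv : v ≠ 0 := by rintro rfl; simp at huv
  rcases mul_eq_zero.1 h with huw | hvz
  · obtain ⟨c, rfl⟩ := (wedge_eq_zero_iff b hu).1 huw
    have hvz : wedge b v (c • z) ≠ 0 := by
      intro hvz
      obtain ⟨e, he⟩ := (wedge_eq_zero_iff b hv).1 hvz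
      exact ne_smul_of_finrank_span_pair_eq_two hR e (by rw [smul_tmul, he, tmul_smul])
    rw [smul_tmul]
    exact hasNormalForm_span_tmul_left b hu hvz
  · obtain ⟨e, rfl⟩ := (wedge_eq_zero_iff b hv).1 hvz
    have huw : wedge b u (e • w) ≠ 0 := by
      intro huw
      obtain ⟨c, hc⟩ := (wedge_eq_zero_iff b hu).1 huw
      exact ne_smul_of_finrank_span_pair_eq_two hR c (by rw [← smul_tmul, hc, smul_tmul'])
    rw [← smul_tmul]
    exact hasNormalForm_span_tmul_right b hv huw

lemma isNormalForm_span_tmul_self {B : V ⊗[k] V} (hm : tensorPolar b (b 0 ⊗ₜ b 0) B = 0)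
    (hd : tensorDet b B ≠ 0) : IsNormalForm b (span k {b 0 ⊗ₜ[k] b 0, B}) := by
  rw [tensorPolar_basis_zero_tmul_basis_zero] at hm
  rw [tensorDet, Matrix.det_fin_two, hm, mul_zero, zero_sub, neg_ne_zero] at hd
  have h01 : coeffMatrix b B 0 1 ≠ 0 := left_ne_zero_of_mul hd
  set q := -(coeffMatrix b B 1 0 / coeffMatrix b B 0 1)
  have hB : B = coeffMatrix b B 0 0 • b 0 ⊗ₜ b 0 +
      coeffMatrix b B 0 1 • (b 0 ⊗ₜ b 1 - q • b 1 ⊗ₜ b 0) := by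
    conv_lhs => rw [eq_sum_coeffMatrix_smul_tmul b B, hm]
    simp only [q]
    match_scalars <;> field_simp
  refine Or.inr (Or.inr (Or.inr (Or.inl ⟨q, ?_⟩)))
  rw [hB, span_pair_smul_add_smul _ _ _ h01]

lemma hasNormalForm_span_basis_tmul_basis [IsAlgClosed k] {B : V ⊗[k] V}
    (hm : tensorPolar b (b 0 ⊗ₜ b 1) B = 0) (hd : tensorDet b B ≠ 0) :
    HasNormalForm b (span k {b 0 ⊗ₜ[k] b 1, B}) := by
  rw [tensorPolar_basis_zero_tmul_basis_one, neg_eq_zero] at hm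
  rw [tensorDet, Matrix.det_fin_two, hm, mul_zero, sub_zero] at hd
  have h00 : coeffMatrix b B 0 0 ≠ 0 := left_ne_zero_of_mul hd
  have h11 : coeffMatrix b B 1 1 ≠ 0 := right_ne_zero_of_mul hd
  obtain ⟨r, hr⟩ :=
    IsAlgClosed.exists_eq_mul_self (-(coeffMatrix b B 0 0 / coeffMatrix b B 1 1))
  have hr0 : r ≠ 0 := by
    rintro rfl
    simp_all
  have hB : B = coeffMatrix b B 0 1 • b 0 ⊗ₜ b 1 +
      (1 : k) •
        (coeffMatrix b B 0 0 • b 0 ⊗ₜ b 0 + coeffMatrix b B 1 1 • b 1 ⊗ₜ b 1) := by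
    conv_lhs => rw [eq_sum_coeffMatrix_smul_tmul b B, hm]
    module
  rw [hB, span_pair_smul_add_smul _ _ _ one_ne_zero]
  set g := diagEquiv b ![1, Units.mk0 r hr0]
  have hg0 : g (b 0) = b 0 := by simp [g]
  have hg1 : g (b 1) = r • b 1 := by simp [g]
  refine .of_map g (IsNormalForm.hasNormalForm (Or.inr (Or.inr (Or.inr (Or.inr (Or.inl ?_))))))
  have hxy :
      TensorProduct.map g.toLinearMap g.toLinearMap (b 0 ⊗ₜ b 1) = r • b 0 ⊗ₜ b 1 := by
    simp [hg0, hg1]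
  have hdiag : TensorProduct.map g.toLinearMap g.toLinearMap
      (coeffMatrix b B 0 0 • b 0 ⊗ₜ b 0 + coeffMatrix b B 1 1 • b 1 ⊗ₜ b 1) =
      coeffMatrix b B 0 0 • (b 0 ⊗ₜ b 0 - b 1 ⊗ₜ b 1) := by
    simp only [map_add, map_smul, map_tmul, LinearEquiv.coe_coe, hg0, hg1, smul_tmul_smul]
    rw [← hr]
    match_scalars <;> field_simp
  rw [map_span, Set.image_pair, hxy, hdiag, span_pair_smul hr0 h00]

lemma hasNormalForm_of_tensorPolar_eq_zero [IsAlgClosed k] {u v : V} {B : V ⊗[k] V} (hu : u ≠ 0)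
    (hv : v ≠ 0) (hm : tensorPolar b (u ⊗ₜ v) B = 0) (hd : tensorDet b B ≠ 0) :
    HasNormalForm b (span k {u ⊗ₜ[k] v, B}) := by
  have hm' (g : V ≃ₗ[k] V) :
      tensorPolar b (g u ⊗ₜ g v) (TensorProduct.map g.toLinearMap g.toLinearMap B) = 0 := by
    rw [← LinearEquiv.coe_coe, ← map_tmul, tensorPolar_map, hm, mul_zero]
  have hd' (g : V ≃ₗ[k] V) :
      tensorDet b (TensorProduct.map g.toLinearMap g.toLinearMap B) ≠ 0 := by
    rw [tensorDet_map]
    exact mul_ne_zero (pow_ne_zero _ g.isUnit_det'.ne_zero) hd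
  by_cases huv : wedge b u v = 0
  · obtain ⟨c, rfl⟩ := (wedge_eq_zero_iff b hu).1 huv
    have hc : c ≠ 0 := by rintro rfl; simp at hv
    obtain ⟨u', hu'⟩ := exists_wedge_ne_zero b hu
    set g := equivOfWedgeNeZero b hu'
    have hm'' := hm' g
    rw [map_smul, equivOfWedgeNeZero_apply_left, tmul_smul, tensorPolar_smul_left,
      mul_eq_zero] at hm''
    refine .of_map g (IsNormalForm.hasNormalForm ?_)
    rw [map_span, Set.image_pair, map_tmul, LinearEquiv.coe_coe, map_smul,
      equivOfWedgeNeZero_apply_left, tmul_smul, span_pair_smul_left hc]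
    exact isNormalForm_span_tmul_self b (hm''.resolve_left hc) (hd' g)
  · set g := equivOfWedgeNeZero b huv
    have hm'' := hm' g
    rw [equivOfWedgeNeZero_apply_left, equivOfWedgeNeZero_apply_right] at hm''
    refine .of_map g ?_
    rw [map_span, Set.image_pair, map_tmul, LinearEquiv.coe_coe, equivOfWedgeNeZero_apply_left,
      equivOfWedgeNeZero_apply_right]
    exact hasNormalForm_span_basis_tmul_basis b hm'' (hd' g)

lemma isNormalForm_span_tmul_sub_tmul {σ : k} (hσ : σ ≠ 0) (τ : k) :
    IsNormalForm b (span k {b 0 ⊗ₜ[k] b 1, (b 0 - b 1) ⊗ₜ (σ • b 0 + τ • b 1)}) := by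
  refine Or.inr (Or.inr (Or.inr (Or.inr (Or.inr ⟨τ / σ, ?_⟩))))
  rw [← span_pair_smul_add_smul (b 0 ⊗ₜ[k] b 1)
    (b 0 ⊗ₜ b 0 - b 1 ⊗ₜ b 0 - (τ / σ) • b 1 ⊗ₜ b 1) τ hσ]
  congr 3
  simp only [sub_tmul, tmul_add, tmul_smul]
  match_scalars <;> field_simp

lemma hasNormalForm_span_basis_tmul_tmul {w z : V} (hw0 : b.repr w 0 ≠ 0)
    (hw1 : b.repr w 1 ≠ 0) (hz0 : b.repr z 0 ≠ 0) :
    HasNormalForm b (span k {b 0 ⊗ₜ[k] b 1, w ⊗ₜ[k] z}) := by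
  set g := diagEquiv b
    ![Units.mk0 _ (inv_ne_zero hw0), Units.mk0 _ (neg_ne_zero.2 (inv_ne_zero hw1))]
  have hg (p : V) :
      g p = (b.repr p 0 / b.repr w 0) • b 0 + (-(b.repr p 1 / b.repr w 1)) • b 1 := by
    conv_lhs => rw [← repr_smul_add_repr_smul b p]
    simp [g, smul_smul, div_eq_mul_inv]
  have hgw : g w = b 0 - b 1 := by
    rw [hg, div_self hw0, div_self hw1]
    module
  have hxy : g (b 0) ⊗ₜ g (b 1) = (-(b.repr w 0 * b.repr w 1)⁻¹) • b 0 ⊗ₜ[k] b 1 := by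
    simp only [g, diagEquiv_apply, smul_tmul_smul]
    simp [mul_comm]
  refine .of_map g (IsNormalForm.hasNormalForm ?_)
  rw [map_span_tmul_pair, hxy, hgw, hg z, span_pair_smul_left (by simp [hw0, hw1])]
  exact isNormalForm_span_tmul_sub_tmul b (div_ne_zero hz0 hw0) _

lemma hasNormalForm_span_tmul_tmul_of_wedge_ne_zero {u v w z : V} (huv : wedge b u v ≠ 0)
    (huw : wedge b u w ≠ 0) (hwv : wedge b w v ≠ 0) (hzv : wedge b z v ≠ 0) :
    HasNormalForm b (span k {u ⊗ₜ[k] v, w ⊗ₜ[k] z}) := by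
  set g := equivOfWedgeNeZero b huv
  have hw1 := wedge_map_ne_zero b g huw
  have hw0 := wedge_map_ne_zero b g hwv
  have hz0 := wedge_map_ne_zero b g hzv
  rw [equivOfWedgeNeZero_apply_left, wedge_basis_zero_left] at hw1
  rw [equivOfWedgeNeZero_apply_right, wedge_basis_one_right] at hw0 hz0
  refine .of_map g ?_
  rw [map_span_tmul_pair, equivOfWedgeNeZero_apply_left, equivOfWedgeNeZero_apply_right]
  exact hasNormalForm_span_basis_tmul_tmul b hw0 hw1 hz0

lemma hasNormalForm_span_tmul_smul_tmul_smul {u w : V} (huw : wedge b u w ≠ 0) {c d : k}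
    (hc : c ≠ 0) (hd : d ≠ 0) :
    HasNormalForm b (span k {u ⊗ₜ[k] (c • u), w ⊗ₜ[k] (d • w)}) := by
  refine .of_map (equivOfWedgeNeZero b huw) (IsNormalForm.hasNormalForm (Or.inr (Or.inl ?_)))
  rw [map_span_tmul_pair, map_smul, map_smul, equivOfWedgeNeZero_apply_left,
    equivOfWedgeNeZero_apply_right, tmul_smul, tmul_smul, span_pair_smul hc hd]

lemma hasNormalForm_span_tmul_smul_tmul_smul_swap {u w : V} (huw : wedge b u w ≠ 0) {c d : k}
    (hc : c ≠ 0) (hd : d ≠ 0) :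
    HasNormalForm b (span k {u ⊗ₜ[k] (c • w), w ⊗ₜ[k] (d • u)}) := by
  refine .of_map (equivOfWedgeNeZero b huw) (IsNormalForm.hasNormalForm (Or.inl ?_))
  rw [map_span_tmul_pair, map_smul, map_smul, equivOfWedgeNeZero_apply_left,
    equivOfWedgeNeZero_apply_right, tmul_smul, tmul_smul, span_pair_smul hc hd]

lemma hasNormalForm_span_tmul_tmul {u v w z : V} (huw : wedge b u w ≠ 0)
    (hvz : wedge b v z ≠ 0) : HasNormalForm b (span k {u ⊗ₜ[k] v, w ⊗ₜ[k] z}) := by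
  by_cases h₁ : wedge b u v ≠ 0 ∧ wedge b w v ≠ 0
  · exact hasNormalForm_span_tmul_tmul_of_wedge_ne_zero b h₁.1 huw h₁.2 (by
      rw [wedge_swap]; exact neg_ne_zero.2 hvz)
  by_cases h₂ : wedge b w z ≠ 0 ∧ wedge b u z ≠ 0
  · rw [Set.pair_comm]
    exact hasNormalForm_span_tmul_tmul_of_wedge_ne_zero b h₂.1 (by
      rw [wedge_swap]; exact neg_ne_zero.2 huw) h₂.2 hvz
  push Not at h₁ h₂
  have hplucker : wedge b u v * wedge b w z - wedge b u z * wedge b w v ≠ 0 := by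
    rw [← wedge_mul_wedge]
    exact mul_ne_zero huw hvz
  have hu := ne_zero_left_of_wedge_ne_zero b huw
  have hw := ne_zero_right_of_wedge_ne_zero b huw
  have hv := ne_zero_left_of_wedge_ne_zero b hvz
  have hz := ne_zero_right_of_wedge_ne_zero b hvz
  by_cases huv : wedge b u v = 0
  · have hwz : wedge b w z = 0 := by
      by_contra hwz
      simp [huv, h₂ hwz] at hplucker
    obtain ⟨c, rfl⟩ := (wedge_eq_zero_iff b hu).1 huv
    obtain ⟨d, rfl⟩ := (wedge_eq_zero_iff b hw).1 hwz
    exact hasNormalForm_span_tmul_smul_tmul_smul b huw (left_ne_zero_of_smul hv)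
      (left_ne_zero_of_smul hz)
  · have hwv : wedge b w v = 0 := h₁ huv
    have huz : wedge b u z = 0 := h₂ fun hwz => by simp [hwz, hwv] at hplucker
    obtain ⟨c, rfl⟩ := (wedge_eq_zero_iff b hw).1 hwv
    obtain ⟨d, rfl⟩ := (wedge_eq_zero_iff b hu).1 huz
    exact hasNormalForm_span_tmul_smul_tmul_smul_swap b huw (left_ne_zero_of_smul hv)
      (left_ne_zero_of_smul hz)

lemma hasNormalForm_of_tensorDet_eq_zero [IsAlgClosed k] {P B : V ⊗[k] V}
    (hR : finrank k (span k {P, B}) = 2) (hP : tensorDet b P = 0) :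
    HasNormalForm b (span k {P, B}) := by
  obtain ⟨u, v, rfl⟩ := exists_eq_tmul_of_tensorDet_eq_zero b hP
  have huv := ne_zero_of_finrank_span_pair_eq_two hR
  have hu : u ≠ 0 := by rintro rfl; simp at huv
  have hv : v ≠ 0 := by rintro rfl; simp at huv
  by_cases hm : tensorPolar b (u ⊗ₜ v) B = 0
  · by_cases hd : tensorDet b B = 0
    · obtain ⟨w, z, rfl⟩ := exists_eq_tmul_of_tensorDet_eq_zero b hd
      refine hasNormalForm_span_tmul_tmul_of_wedge_mul_eq_zero b hR ?_
      rw [← tensorDet_tmul_add_tmul, ← one_smul k (u ⊗ₜ v), tensorDet_smul_add, hP, hm, hd]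
      ring
    · exact hasNormalForm_of_tensorPolar_eq_zero b hu hv hm hd
  set m := tensorPolar b (u ⊗ₜ v) B
  set d := tensorDet b B
  -- `s ↦ tensorDet (s • u ⊗ v + B)` is affine of slope `m ≠ 0`; its root is rank one.
  set Q := (-(d / m)) • u ⊗ₜ[k] v + B
  have hQ : tensorDet b Q = 0 := by
    rw [tensorDet_smul_add, tensorDet_tmul]
    field_simp
    ring
  obtain ⟨w, z, hwz⟩ := exists_eq_tmul_of_tensorDet_eq_zero b hQ
  have hdet : wedge b u w * wedge b v z = m := by
    rw [← tensorDet_tmul_add_tmul, ← hwz,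
      show u ⊗ₜ v + Q = (1 - d / m) • u ⊗ₜ[k] v + B by simp only [Q]; module,
      tensorDet_smul_add, tensorDet_tmul]
    field_simp
    ring
  have hspan : span k {u ⊗ₜ v, Q} = span k {u ⊗ₜ v, B} := by
    simpa only [one_smul] using span_pair_smul_add_smul (u ⊗ₜ[k] v) B (-(d / m)) one_ne_zero
  rw [← hspan, hwz]
  exact hasNormalForm_span_tmul_tmul b (left_ne_zero_of_mul (hdet ▸ hm))
    (right_ne_zero_of_mul (hdet ▸ hm))

lemma exists_tensorDet_eq_zero_and_span_pair_eq [IsAlgClosed k] (A B : V ⊗[k] V) :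
    ∃ P B' : V ⊗[k] V, tensorDet b P = 0 ∧ span k {A, B} = span k {P, B'} := by
  by_cases hA : tensorDet b A = 0
  · exact ⟨A, B, hA, rfl⟩
  obtain ⟨s, hs⟩ := IsAlgClosed.exists_root
    (Polynomial.C (tensorDet b A) * Polynomial.X ^ 2 +
      Polynomial.C (tensorPolar b A B) * Polynomial.X + Polynomial.C (tensorDet b B))
    (by rw [Polynomial.degree_quadratic hA]; decide)
  refine ⟨s • A + B, A, ?_, ?_⟩
  · simp only [Polynomial.IsRoot, Polynomial.eval_add, Polynomial.eval_mul, Polynomial.eval_C,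
      Polynomial.eval_pow, Polynomial.eval_X] at hs
    rw [tensorDet_smul_add]
    linear_combination hs
  · rw [Set.pair_comm (s • A + B), ← span_pair_smul_add_smul A B s one_ne_zero, one_smul]

end QuadraticRelations

open QuadraticRelations

/-- Let `k` be an algebraically closed field and `V` a 2-dimensional
`k`-vector space with basis `{x, y}` (here `x = b 0`, `y = b 1`).  Every 2-dimensional
subspace `R` of `V ⊗ V` can be moved by some `g ∈ GL(V)` (acting as `g ⊗ g`) onto one of:
`span{x⊗y, y⊗x}`, `span{x⊗x, y⊗y}`, `span{x⊗x, y⊗x}`,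
`span{x⊗x, x⊗y − q·(y⊗x)}` for some `q ∈ k`, `span{x⊗y, x⊗x − y⊗y}`, or
`span{x⊗y, x⊗x − y⊗x − q·(y⊗y)}` for some `q ∈ k`. -/
theorem stmt1 (k V : Type) [Field k] [IsAlgClosed k] [AddCommGroup V] [Module k V]
    (b : Module.Basis (Fin 2) k V) (R : Submodule k (V ⊗[k] V)) (hR : Module.finrank k R = 2) :
    ∃ g : V ≃ₗ[k] V,
      Submodule.map (TensorProduct.map g.toLinearMap g.toLinearMap) R =
          Submodule.span k {b 0 ⊗ₜ[k] b 1, b 1 ⊗ₜ[k] b 0} ∨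
      Submodule.map (TensorProduct.map g.toLinearMap g.toLinearMap) R =
          Submodule.span k {b 0 ⊗ₜ[k] b 0, b 1 ⊗ₜ[k] b 1} ∨
      Submodule.map (TensorProduct.map g.toLinearMap g.toLinearMap) R =
          Submodule.span k {b 0 ⊗ₜ[k] b 0, b 1 ⊗ₜ[k] b 0} ∨
      (∃ q : k, Submodule.map (TensorProduct.map g.toLinearMap g.toLinearMap) R =
          Submodule.span k {b 0 ⊗ₜ[k] b 0, b 0 ⊗ₜ[k] b 1 - q • (b 1 ⊗ₜ[k] b 0)}) ∨
      Submodule.map (TensorProduct.map g.toLinearMap g.toLinearMap) R =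
          Submodule.span k {b 0 ⊗ₜ[k] b 1, b 0 ⊗ₜ[k] b 0 - b 1 ⊗ₜ[k] b 1} ∨
      (∃ q : k, Submodule.map (TensorProduct.map g.toLinearMap g.toLinearMap) R =
          Submodule.span k {b 0 ⊗ₜ[k] b 1, b 0 ⊗ₜ[k] b 0 - b 1 ⊗ₜ[k] b 0 - q • (b 1 ⊗ₜ[k] b 1)}) := by
  obtain ⟨A, B, rfl⟩ := exists_eq_span_pair_of_finrank_eq_two hR
  obtain ⟨P, B', hP, hspan⟩ := exists_tensorDet_eq_zero_and_span_pair_eq b A B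
  rw [hspan] at hR ⊢
  exact hasNormalForm_of_tensorDet_eq_zero b hR hP
end
end

section
/- Let k be an algebraically closed field and V a 2-dimensional k-vector space with basis {x, y}. For q, q' ∈ k, there exists g ∈ GL(V) with (g ⊗ g)(span{x⊗x, x⊗y − q·(y⊗x)}) = span{x⊗x, x⊗y − q'·(y⊗x)} if and only if q = q'. (Equivalently, the quadratic algebras A⁷(q) = k⟨x,y⟩/(x², xy − q·yx) are pairwise non-isomorphic as graded algebras for distinct q.) -/
/-!
A linear automorphism `g` with `(g ⊗ g)(R_q) = R_{q'}` sends `x ⊗ x` to the pure tensor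
`g x ⊗ g x ∈ R_{q'}`. Every element of `R_{q'}` has vanishing `y ⊗ y`-coordinate, so `g x` is a
multiple of `x`. Any such `g` (invertible or not) maps `R_q` into itself, hence `R_{q'} ⊆ R_q`,
and comparing the `x ⊗ y`- and `y ⊗ x`-coordinates of `x ⊗ y - q' • y ⊗ x ∈ R_q` gives `q' = q`.
-/

open scoped TensorProduct

open Submodule TensorProduct

namespace Module.Basis

variable {k V : Type*} [CommRing k] [AddCommGroup V] [Module k V] (b : Basis (Fin 2) k V)

lemma repr_zero_smul_add_repr_one_smul (v : V) : b.repr v 0 • b 0 + b.repr v 1 • b 1 = v := by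
  rw [← Fin.sum_univ_two (fun i => b.repr v i • b i), b.sum_repr]

/-- The relation space `R_q` of `A⁷(q)`, with `x = b 0` and `y = b 1`. -/
def relationsA7 (q : k) : Submodule k (V ⊗[k] V) :=
  span k {b 0 ⊗ₜ[k] b 0, b 0 ⊗ₜ[k] b 1 - q • (b 1 ⊗ₜ[k] b 0)}

lemma tensorProduct_repr_one_one_eq_zero_of_mem_relationsA7 {q : k} {t : V ⊗[k] V}
    (ht : t ∈ b.relationsA7 q) : (b.tensorProduct b).repr t (1, 1) = 0 := by
  obtain ⟨α, β, rfl⟩ := mem_span_pair.mp ht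
  simp

lemma repr_one_eq_zero_of_tmul_self_mem_relationsA7 [NoZeroDivisors k] {q : k} {v : V}
    (hv : v ⊗ₜ[k] v ∈ b.relationsA7 q) : b.repr v 1 = 0 := by
  simpa using b.tensorProduct_repr_one_one_eq_zero_of_mem_relationsA7 hv

lemma eq_of_mem_relationsA7 {q q' : k}
    (h : b 0 ⊗ₜ[k] b 1 - q' • (b 1 ⊗ₜ[k] b 0) ∈ b.relationsA7 q) : q' = q := by
  obtain ⟨α, β, e⟩ := mem_span_pair.mp h
  have h01 := congrArg (fun t => (b.tensorProduct b).repr t (0, 1)) e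
  have h10 := congrArg (fun t => (b.tensorProduct b).repr t (1, 0)) e
  simp at h01 h10
  rw [← h10, h01, one_mul]

lemma map_relationsA7_le (q : k) (f : V →ₗ[k] V) (hf : b.repr (f (b 0)) 1 = 0) :
    (b.relationsA7 q).map (TensorProduct.map f f) ≤ b.relationsA7 q := by
  have hx : f (b 0) = b.repr (f (b 0)) 0 • b 0 := by
    simpa [hf] using (b.repr_zero_smul_add_repr_one_smul (f (b 0))).symm
  have hy := (b.repr_zero_smul_add_repr_one_smul (f (b 1))).symm
  set a := b.repr (f (b 0)) 0
  set c := b.repr (f (b 1)) 0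
  set d := b.repr (f (b 1)) 1
  rw [map_le_iff_le_comap, relationsA7, span_le, Set.pair_subset_iff]
  refine ⟨mem_span_pair.mpr ⟨a * a, 0, ?_⟩, mem_span_pair.mpr ⟨a * c * (1 - q), a * d, ?_⟩⟩
  all_goals
    simp only [map_sub, map_smul, map_tmul, hx, hy, tmul_add, add_tmul, ← smul_tmul', tmul_smul]
    module

end Module.Basis

theorem stmt3_general (k V : Type) [Field k] [AddCommGroup V] [Module k V]
    (b : Module.Basis (Fin 2) k V) (q q' : k) :
    (∃ g : V ≃ₗ[k] V,
        Submodule.map (TensorProduct.map g.toLinearMap g.toLinearMap)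
            (Submodule.span k {b 0 ⊗ₜ[k] b 0, b 0 ⊗ₜ[k] b 1 - q • (b 1 ⊗ₜ[k] b 0)}) =
          Submodule.span k {b 0 ⊗ₜ[k] b 0, b 0 ⊗ₜ[k] b 1 - q' • (b 1 ⊗ₜ[k] b 0)}) ↔ q = q' := by
  refine ⟨fun ⟨g, hg⟩ => ?_, fun h => ⟨LinearEquiv.refl k V, by simp [h, TensorProduct.map_id]⟩⟩
  change (b.relationsA7 q).map _ = b.relationsA7 q' at hg
  have hgx : g (b 0) ⊗ₜ[k] g (b 0) ∈ b.relationsA7 q' :=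
    hg ▸ mem_map_of_mem (subset_span (Set.mem_insert _ _))
  have hle := b.map_relationsA7_le q g.toLinearMap
    (b.repr_one_eq_zero_of_tmul_self_mem_relationsA7 hgx)
  rw [hg] at hle
  exact (b.eq_of_mem_relationsA7 (hle (subset_span (Set.mem_insert_of_mem _ rfl)))).symm

/-- Let `k` be an algebraically closed field and `V` a 2-dimensional
`k`-vector space with basis `{x, y}` (here `x = b 0`, `y = b 1`).  For `q, q' ∈ k`
there is `g ∈ GL(V)` with `(g ⊗ g)(span{x⊗x, x⊗y − q·(y⊗x)}) = span{x⊗x, x⊗y − q'·(y⊗x)}`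
iff `q = q'` (i.e. the algebras `A⁷(q)` are pairwise non-isomorphic as graded algebras). -/
theorem stmt3 (k V : Type) [Field k] [IsAlgClosed k] [AddCommGroup V] [Module k V]
    (b : Module.Basis (Fin 2) k V) (q q' : k) :
    (∃ g : V ≃ₗ[k] V,
        Submodule.map (TensorProduct.map g.toLinearMap g.toLinearMap)
            (Submodule.span k {b 0 ⊗ₜ[k] b 0, b 0 ⊗ₜ[k] b 1 - q • (b 1 ⊗ₜ[k] b 0)}) =
          Submodule.span k {b 0 ⊗ₜ[k] b 0, b 0 ⊗ₜ[k] b 1 - q' • (b 1 ⊗ₜ[k] b 0)}) ↔ q = q' :=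
  stmt3_general k V b q q'
end

section
/- Let k be an algebraically closed field and V a 2-dimensional k-vector space with basis {x, y}. For nonzero q, q' ∈ k, there exists g ∈ GL(V) with (g ⊗ g)(span{x⊗x, y⊗y, x⊗y − q·(y⊗x)}) = span{x⊗x, y⊗y, x⊗y − q'·(y⊗x)} if and only if q' = q or q·q' = 1. (Equivalently, for nonzero q and q', the quadratic algebras A²(q) = k⟨x,y⟩/(x², y², xy − q·yx) and A²(q') are isomorphic as graded algebras if and only if q' ∈ {q, q⁻¹}.) -/
/-!
The relation space `R(q) = span{x⊗x, y⊗y, x⊗y − q·y⊗x}` is the hyperplane of `V ⊗ V` cut out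
by the form `w ↦ w_{yx} + q·w_{xy}`. If `g ⊗ g` maps `R(q)` into `R(q')`, evaluating this form
on the images of the three generators gives, for `g x = a x + c y` and `g y = e x + d y`,
`ac(1 + q') = 0`, `ed(1 + q') = 0` and `ce − qad + q'(ad − qce) = 0`.
For `q' = −1` the last equation reads `(1 + q)(ce − ad) = 0`, so `q = −1`; otherwise `g` is
diagonal, forcing `q' = q`, or antidiagonal, forcing `qq' = 1`. Conversely the identity and
the swap `x ↔ y` realise these two cases.
-/

open scoped TensorProduct

section QuantumExterior

variable {k V : Type} [Field k] [AddCommGroup V] [Module k V]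

def quantumExteriorRelations (b : Module.Basis (Fin 2) k V) (q : k) : Submodule k (V ⊗[k] V) :=
  Submodule.span k {b 0 ⊗ₜ[k] b 0, b 1 ⊗ₜ[k] b 1, b 0 ⊗ₜ[k] b 1 - q • (b 1 ⊗ₜ[k] b 0)}

noncomputable def quantumExteriorForm (b : Module.Basis (Fin 2) k V) (q : k) : V ⊗[k] V →ₗ[k] k :=
  (b.tensorProduct b).coord (1, 0) + q • (b.tensorProduct b).coord (0, 1)

@[simp]
lemma quantumExteriorForm_tmul (b : Module.Basis (Fin 2) k V) (q : k) (u v : V) :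
    quantumExteriorForm b q (u ⊗ₜ[k] v) =
      b.repr u 1 * b.repr v 0 + q * (b.repr u 0 * b.repr v 1) := by
  simp [quantumExteriorForm, Module.Basis.tensorProduct_repr_tmul_apply]
  ring

lemma quantumExteriorRelations_eq_ker (b : Module.Basis (Fin 2) k V) (q : k) :
    quantumExteriorRelations b q = LinearMap.ker (quantumExteriorForm b q) := by
  refine le_antisymm ?_ fun w hw => ?_
  · rw [quantumExteriorRelations, Submodule.span_le]
    rintro v (rfl | rfl | rfl) <;> simp [mul_comm]
  · set r := (b.tensorProduct b).repr w
    have hdecomp : w = r (0, 0) • (b 0 ⊗ₜ[k] b 0) + r (1, 1) • (b 1 ⊗ₜ[k] b 1) +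
        r (0, 1) • (b 0 ⊗ₜ[k] b 1 - q • (b 1 ⊗ₜ[k] b 0)) := by
      have hr : r (1, 0) + q * r (0, 1) = 0 := by
        simpa [quantumExteriorForm, Module.Basis.coord_apply] using hw
      apply (b.tensorProduct b).repr.injective
      ext ⟨i, j⟩
      fin_cases i <;> fin_cases j <;> simp [r, ← Module.Basis.tensorProduct_apply, Prod.ext_iff]
      linear_combination hr
    rw [hdecomp]
    refine add_mem (add_mem ?_ ?_) ?_ <;>
      exact Submodule.smul_mem _ _ (Submodule.subset_span (by simp))

lemma eq_or_mul_eq_one_of_relations {a c e d q q' : k} (hdet : a * d - e * c ≠ 0)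
    (hxx : c * a + q' * (a * c) = 0) (hyy : d * e + q' * (e * d) = 0)
    (hxy : c * e + q' * (a * d) - q * (d * a + q' * (e * c)) = 0) :
    q' = q ∨ q * q' = 1 := by
  by_cases hq' : 1 + q' = 0
  · have : (1 + q) * (a * d - e * c) = 0 := by linear_combination -hxy + (a * d - q * e * c) * hq'
    left
    linear_combination hq' - (mul_eq_zero.mp this).resolve_right hdet
  have hac : a * c = 0 :=
    (mul_eq_zero.mp (by linear_combination hxx : a * c * (1 + q') = 0)).resolve_right hq'
  have hed : e * d = 0 :=
    (mul_eq_zero.mp (by linear_combination hyy : e * d * (1 + q') = 0)).resolve_right hq'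
  rcases mul_eq_zero.mp hac with ha | hc
  · have hec : e * c ≠ 0 := fun h => hdet (by linear_combination d * ha - h)
    have hd : d = 0 := (mul_eq_zero.mp hed).resolve_left (left_ne_zero_of_mul hec)
    right
    have : e * c * (1 - q * q') = 0 := by linear_combination hxy + (q * d - q' * d) * ha
    linear_combination -(mul_eq_zero.mp this).resolve_left hec
  · have had : a * d ≠ 0 := fun h => hdet (by linear_combination h - e * hc)
    have he : e = 0 := (mul_eq_zero.mp hed).resolve_right (right_ne_zero_of_mul had)
    left
    have : a * d * (q' - q) = 0 := by linear_combination hxy + (q * q' * c - c) * he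
    exact sub_eq_zero.mp ((mul_eq_zero.mp this).resolve_left had)

lemma eq_or_mul_eq_one_of_map_le (b : Module.Basis (Fin 2) k V) {q q' : k} (g : V ≃ₗ[k] V)
    (hg : (quantumExteriorRelations b q).map (TensorProduct.map g.toLinearMap g.toLinearMap) ≤
      quantumExteriorRelations b q') :
    q' = q ∨ q * q' = 1 := by
  have hdet : b.repr (g (b 0)) 0 * b.repr (g (b 1)) 1 - b.repr (g (b 1)) 0 * b.repr (g (b 0)) 1
      ≠ 0 := by
    have hu := g.isUnit_det b b
    rw [Matrix.det_fin_two] at hu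
    simpa [LinearMap.toMatrix_apply, isUnit_iff_ne_zero] using hu
  have hmem : ∀ w ∈ quantumExteriorRelations b q,
      quantumExteriorForm b q' (TensorProduct.map g.toLinearMap g.toLinearMap w) = 0 := by
    intro w hw
    rw [← LinearMap.mem_ker, ← quantumExteriorRelations_eq_ker]
    exact hg (Submodule.mem_map_of_mem hw)
  have hxx := hmem (b 0 ⊗ₜ[k] b 0) (Submodule.subset_span (by simp))
  have hyy := hmem (b 1 ⊗ₜ[k] b 1) (Submodule.subset_span (by simp))
  have hxy := hmem (b 0 ⊗ₜ[k] b 1 - q • (b 1 ⊗ₜ[k] b 0)) (Submodule.subset_span (by simp))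
  simp only [TensorProduct.map_tmul, map_sub, map_smul, LinearEquiv.coe_coe,
    quantumExteriorForm_tmul, smul_eq_mul] at hxx hyy hxy
  exact eq_or_mul_eq_one_of_relations hdet hxx hyy hxy

lemma map_swap_quantumExteriorRelations (b : Module.Basis (Fin 2) k V) {q q' : k}
    (hqq : q * q' = 1) :
    (quantumExteriorRelations b q).map (TensorProduct.map (b.equiv b (Equiv.swap 0 1)).toLinearMap
      (b.equiv b (Equiv.swap 0 1)).toLinearMap) = quantumExteriorRelations b q' := by
  have hunit : IsUnit (-q') :=
    isUnit_iff_ne_zero.mpr (neg_ne_zero.mpr (right_ne_zero_of_mul_eq_one hqq))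
  have hxy : b 0 ⊗ₜ[k] b 1 - q' • (b 1 ⊗ₜ[k] b 0) =
      (-q') • (b 1 ⊗ₜ[k] b 0 - q • (b 0 ⊗ₜ[k] b 1)) := by
    rw [smul_sub, smul_smul]
    match_scalars
    · linear_combination -hqq
    · ring
  rw [quantumExteriorRelations, quantumExteriorRelations, Submodule.map_span, hxy]
  simp only [Set.image_insert_eq, Set.image_singleton, TensorProduct.map_tmul, map_sub, map_smul,
    LinearEquiv.coe_coe, Module.Basis.equiv_apply, Equiv.swap_apply_left, Equiv.swap_apply_right,
    Submodule.span_insert, Submodule.span_singleton_smul_eq hunit]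
  exact sup_left_comm _ _ _

end QuantumExterior

theorem stmt4_general (k V : Type) [Field k] [AddCommGroup V] [Module k V]
    (b : Module.Basis (Fin 2) k V) (q q' : k) :
    (∃ g : V ≃ₗ[k] V,
        Submodule.map (TensorProduct.map g.toLinearMap g.toLinearMap)
            (Submodule.span k
              {b 0 ⊗ₜ[k] b 0, b 1 ⊗ₜ[k] b 1, b 0 ⊗ₜ[k] b 1 - q • (b 1 ⊗ₜ[k] b 0)}) =
          Submodule.span k
            {b 0 ⊗ₜ[k] b 0, b 1 ⊗ₜ[k] b 1, b 0 ⊗ₜ[k] b 1 - q' • (b 1 ⊗ₜ[k] b 0)}) ↔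
      (q' = q ∨ q * q' = 1) := by
  constructor
  · rintro ⟨g, hg⟩
    exact eq_or_mul_eq_one_of_map_le b g hg.le
  · rintro (rfl | hqq)
    · exact ⟨LinearEquiv.refl k V, by simp [TensorProduct.map_id]⟩
    · exact ⟨_, map_swap_quantumExteriorRelations b hqq⟩

/-- Let `k` be an algebraically closed field and `V` a 2-dimensional
`k`-vector space with basis `{x, y}` (here `x = b 0`, `y = b 1`).  For nonzero `q, q' ∈ k`
there is `g ∈ GL(V)` with
`(g ⊗ g)(span{x⊗x, y⊗y, x⊗y − q·(y⊗x)}) = span{x⊗x, y⊗y, x⊗y − q'·(y⊗x)}`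
iff `q' = q` or `q·q' = 1` (i.e. `A²(q) ≅ A²(q')` as graded algebras iff `q' ∈ {q, q⁻¹}`). -/
theorem stmt4 (k V : Type) [Field k] [IsAlgClosed k] [AddCommGroup V] [Module k V]
    (b : Module.Basis (Fin 2) k V) (q q' : k) (hq : q ≠ 0) (hq' : q' ≠ 0) :
    (∃ g : V ≃ₗ[k] V,
        Submodule.map (TensorProduct.map g.toLinearMap g.toLinearMap)
            (Submodule.span k
              {b 0 ⊗ₜ[k] b 0, b 1 ⊗ₜ[k] b 1, b 0 ⊗ₜ[k] b 1 - q • (b 1 ⊗ₜ[k] b 0)}) =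
          Submodule.span k
            {b 0 ⊗ₜ[k] b 0, b 1 ⊗ₜ[k] b 1, b 0 ⊗ₜ[k] b 1 - q' • (b 1 ⊗ₜ[k] b 0)}) ↔
      (q' = q ∨ q * q' = 1) :=
  stmt4_general k V b q q'
end

section
/- Let k be an algebraically closed field and V a 2-dimensional k-vector space. Every 2-dimensional subspace R of V ⊗ V contains a nonzero decomposable tensor, i.e., there exist u, v ∈ V with u ⊗ v ∈ R and u ⊗ v ≠ 0. -/
open scoped TensorProduct
open Matrix

/-!
In coordinates with respect to a basis of `V`, tensors in `V ⊗ V` are `2 × 2` matrices, and the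
decomposable ones are exactly the singular ones. If `R` is spanned by `A` and `C`, then
`det (x • A + y • C)` is a binary form of degree two, which has a nontrivial zero over an
algebraically closed field: when `C` is invertible, `y = -μ` for an eigenvalue `μ` of `C⁻¹ * A`.
-/

theorem Matrix.exists_det_smul_add_smul_eq_zero {k n : Type*} [Field k] [IsAlgClosed k]
    [Fintype n] [DecidableEq n] [Nonempty n] (A C : Matrix n n k) :
    ∃ x y : k, (x, y) ≠ 0 ∧ (x • A + y • C).det = 0 := by
  by_cases hC : C.det = 0
  · exact ⟨0, 1, by simp, by simpa using hC⟩
  obtain ⟨μ, hμ⟩ := Module.End.exists_eigenvalue (toLin' (C⁻¹ * A))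
  obtain ⟨v, hv⟩ := hμ.exists_hasEigenvector
  refine ⟨1, -μ, by simp, exists_mulVec_eq_zero_iff.mp ⟨v, hv.2, ?_⟩⟩
  have hCA : (C⁻¹ * A) *ᵥ v = μ • v := by simpa using hv.apply_eq_smul
  have hA : A *ᵥ v = μ • C *ᵥ v := by
    rw [← mulVec_smul, ← hCA, mulVec_mulVec, ← Matrix.mul_assoc,
      mul_nonsing_inv C (isUnit_iff_ne_zero.mpr hC), Matrix.one_mul]
  rw [one_smul, neg_smul, add_mulVec, neg_mulVec, smul_mulVec, hA, add_neg_cancel]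

theorem Matrix.exists_eq_vecMulVec_of_det_eq_zero {k : Type*} [Field k]
    {A : Matrix (Fin 2) (Fin 2) k} (hA : A.det = 0) : ∃ u v : Fin 2 → k, A = vecMulVec u v := by
  rw [det_fin_two, sub_eq_zero] at hA
  by_cases h00 : A 0 0 = 0
  · by_cases h01 : A 0 1 = 0
    · refine ⟨![0, 1], A 1, ?_⟩
      ext i j; fin_cases i <;> fin_cases j <;> simp [vecMulVec_apply, h00, h01]
    · have h10 : A 1 0 = 0 := by simpa [h00, h01] using hA.symm
      refine ⟨(A · 1), ![0, 1], ?_⟩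
      ext i j; fin_cases i <;> fin_cases j <;> simp [vecMulVec_apply, h00, h10]
  · refine ⟨(A · 0), ![1, A 0 1 / A 0 0], ?_⟩
    ext i j; fin_cases i <;> fin_cases j <;> simp [vecMulVec_apply] <;> field_simp
    linear_combination hA

namespace Module.Basis

variable {k V W ι κ : Type*} [Field k] [AddCommGroup V] [Module k V] [AddCommGroup W]
  [Module k W] [Fintype ι] [Fintype κ]

noncomputable def tensorProductMatrix (b : Basis ι k V) (c : Basis κ k W) :
    V ⊗[k] W ≃ₗ[k] Matrix ι κ k :=
  (b.tensorProduct c).equivFun ≪≫ₗ LinearEquiv.curry k k ι κ ≪≫ₗ Matrix.ofLinearEquiv k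

@[simp]
theorem tensorProductMatrix_tmul (b : Basis ι k V) (c : Basis κ k W) (x : V) (y : W) :
    b.tensorProductMatrix c (x ⊗ₜ y) = vecMulVec (b.repr x) (c.repr y) := by
  ext i j
  simp [tensorProductMatrix, vecMulVec_apply, mul_comm]

theorem tensorProductMatrix_symm_vecMulVec (b : Basis ι k V) (c : Basis κ k W) (u : ι → k)
    (v : κ → k) :
    (b.tensorProductMatrix c).symm (vecMulVec u v) = b.equivFun.symm u ⊗ₜ c.equivFun.symm v := by
  rw [LinearEquiv.symm_apply_eq, tensorProductMatrix_tmul]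
  exact congr_arg₂ vecMulVec (b.equivFun.apply_symm_apply u).symm
    (c.equivFun.apply_symm_apply v).symm

end Module.Basis

/-- Let `k` be an algebraically closed field and `V` a 2-dimensional
`k`-vector space.  Every 2-dimensional subspace `R` of `V ⊗ V` contains a nonzero
decomposable tensor `u ⊗ v`. -/
theorem stmt5 (k V : Type) [Field k] [IsAlgClosed k] [AddCommGroup V] [Module k V]
    (hV : Module.finrank k V = 2) (R : Submodule k (V ⊗[k] V))
    (hR : Module.finrank k R = 2) :
    ∃ u v : V, u ⊗ₜ[k] v ∈ R ∧ u ⊗ₜ[k] v ≠ 0 := by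
  have : Module.Finite k V := Module.finite_of_finrank_pos (by omega)
  have : Module.Finite k R := Module.finite_of_finrank_pos (by omega)
  let b := Module.finBasisOfFinrankEq k V hV
  let r := Module.finBasisOfFinrankEq k R hR
  let e := b.tensorProductMatrix b
  obtain ⟨x, y, hxy, hdet⟩ := exists_det_smul_add_smul_eq_zero (e (r 0)) (e (r 1))
  set t : R := x • r 0 + y • r 1
  have ht : t ≠ 0 := fun h ↦ hxy <| by
    have hr : LinearIndependent k ![r 0, r 1] := by
      convert r.linearIndependent; ext i; fin_cases i <;> rfl
    exact Prod.mk_eq_zero.mpr (LinearIndependent.pair_iff.mp hr x y h)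
  obtain ⟨u, v, huv⟩ := exists_eq_vecMulVec_of_det_eq_zero (A := e t) (by simpa [t] using hdet)
  have hte : (t : V ⊗[k] V) = b.equivFun.symm u ⊗ₜ b.equivFun.symm v := by
    rw [← b.tensorProductMatrix_symm_vecMulVec, ← huv, LinearEquiv.symm_apply_apply]
  exact ⟨_, _, hte ▸ t.2, hte ▸ mt Submodule.coe_eq_zero.mp ht⟩
end

section
/- Let k be an algebraically closed field, s > 2, m ≥ 0, F = k⟨x₁,…,x_m,y⟩ the free associative k-algebra, and L the k-span of its generators. Let f ∈ L^{s−1} be homogeneous of degree s−1 such that y·f and f·y are linearly independent, and assume it is NOT the case that s = 2t and f = (g·y)^{t−1}·g for some integer t and some g ∈ L. Set W = span{y·f, f·y}. Then W·L^{s−1} ∩ L·(Σ_{i=0}^{s−2} L^i·W·L^{s−2−i}) ≠ (W·L ∩ L·W)·L^{s−2}, as subspaces of L^{2s−1} ⊆ F. -/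
/-!
The element `f·y·f` lies in the left-hand side, as `(f·y)·f` and as `f·(y·f)`, so equality
would put it in `L·W·L^(s-2)`. Stripping a first letter `x` and a last word `v` of length
`s - 2`, this says `lquot x f · y · rquot v f ∈ W` for all such `x` and `v`.

If every word of `f` starts with `y`, this forces `f = c·y^(s-1)`, hence `y·f = f·y`.
Otherwise some first letter `z₀ ≠ y` occurs; stripping `z₀` and then `y` on the right kills
`f·y` and shows that all `lquot x f` are proportional, so `f = g·y·q` with `g ∈ L`, and the
condition becomes `q·y·g = λ·g·y·q`. Thus `q·y` commutes with `P = g·y` up to `λ`, and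
peeling `P` off on the left (again by stripping letters) gives `q·y = c·P^e`, i.e.
`f = c·(g·y)^e·g` with `s = 2(e+1)`. Over an algebraically closed field `c` is absorbed into
`g`, which is the excluded form.

Coefficients are read off in `k[FreeMonoid X] ≃ FreeAlgebra k X`, where `lquot u F` and
`rquot v F` are the left and right quotients `w ↦ F(u·w)` and `w ↦ F(w·v)`.
-/

noncomputable section

/-- The span `L` of the generators of the free algebra `k⟨X⟩`
(the degree-one homogeneous component). -/
def faGens (k X : Type) [Field k] : Submodule k (FreeAlgebra k X) :=
  Submodule.span k (Set.range (FreeAlgebra.ι k : X → FreeAlgebra k X))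

open MonoidAlgebra

namespace FreeMonoidAlgebra

variable {k X : Type*}

section CommSemiring

variable [CommSemiring k]

variable (k) in
def letter (x : X) : k[FreeMonoid X] := single (FreeMonoid.of x) 1

variable (k X) in
def letters : Submodule k k[FreeMonoid X] := Submodule.span k (Set.range (letter k))

def lquot (u : FreeMonoid X) : k[FreeMonoid X] →ₗ[k] k[FreeMonoid X] :=
  (coeffLinearEquiv k).symm.toLinearMap ∘ₗ
    Finsupp.lcomapDomain (u * ·) (fun _ _ h => mul_left_cancel h) ∘ₗ
      (coeffLinearEquiv k).toLinearMap

def rquot (v : FreeMonoid X) : k[FreeMonoid X] →ₗ[k] k[FreeMonoid X] :=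
  (coeffLinearEquiv k).symm.toLinearMap ∘ₗ
    Finsupp.lcomapDomain (· * v) (fun _ _ h => mul_right_cancel h) ∘ₗ
      (coeffLinearEquiv k).toLinearMap

@[simp] lemma coeff_lquot (u w : FreeMonoid X) (F : k[FreeMonoid X]) :
    (lquot u F).coeff w = F.coeff (u * w) := rfl

@[simp] lemma coeff_rquot (v w : FreeMonoid X) (F : k[FreeMonoid X]) :
    (rquot v F).coeff w = F.coeff (w * v) := rfl

@[simp] lemma rquot_one (F : k[FreeMonoid X]) : rquot 1 F = F := by
  ext w; simp

lemma rquot_rquot (u v : FreeMonoid X) (F : k[FreeMonoid X]) :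
    rquot u (rquot v F) = rquot (u * v) F := by
  ext w; simp [mul_assoc]

@[simp] lemma coeff_letter_self (x : X) : (letter k x).coeff (FreeMonoid.of x) = 1 := by
  simp [letter]

lemma coeff_letter_of_ne {x z : X} (h : x ≠ z) : (letter k x).coeff (FreeMonoid.of z) = 0 := by
  simp only [letter, coeff_single]
  exact Finsupp.single_eq_of_ne (fun e => h (FreeMonoid.of_injective e.symm))

@[simp] lemma lquot_letter_mul_self (x : X) (B : k[FreeMonoid X]) :
    lquot (FreeMonoid.of x) (letter k x * B) = B := by
  ext w; simp [letter]

lemma lquot_letter_mul_of_ne {x z : X} (h : x ≠ z) (B : k[FreeMonoid X]) :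
    lquot (FreeMonoid.of z) (letter k x * B) = 0 := by
  ext w
  refine coeff_single_mul_of_forall_mul_ne _ _ fun d hd => h ?_
  exact (by simpa using congrArg FreeMonoid.toList hd : x = z ∧ d = w).1

@[simp] lemma rquot_mul_letter_self (x : X) (B : k[FreeMonoid X]) :
    rquot (FreeMonoid.of x) (B * letter k x) = B := by
  ext w; simp [letter]

lemma rquot_mul_letter_of_ne {x z : X} (h : x ≠ z) (B : k[FreeMonoid X]) :
    rquot (FreeMonoid.of z) (B * letter k x) = 0 := by
  ext w
  refine coeff_mul_single_of_forall_mul_ne _ _ fun d hd => h ?_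
  exact (by simpa using congrArg FreeMonoid.toList hd : d = w ∧ x = z).2

lemma lquot_mul_of_mem_letters {g : k[FreeMonoid X]} (hg : g ∈ letters k X) (x : X)
    (b : k[FreeMonoid X]) : lquot (FreeMonoid.of x) (g * b) = g.coeff (FreeMonoid.of x) • b := by
  induction hg using Submodule.span_induction with
  | mem _ h =>
    obtain ⟨y, rfl⟩ := h
    rcases eq_or_ne y x with rfl | hyx
    · simp
    · simp [lquot_letter_mul_of_ne hyx, coeff_letter_of_ne hyx]
  | zero => simp
  | add _ _ _ _ h₁ h₂ => simp [add_mul, h₁, h₂, add_smul]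
  | smul c _ _ h => simp [h, smul_smul]

lemma rquot_mul_of_mem_letters {g : k[FreeMonoid X]} (hg : g ∈ letters k X) (z : X)
    (b : k[FreeMonoid X]) : rquot (FreeMonoid.of z) (b * g) = g.coeff (FreeMonoid.of z) • b := by
  induction hg using Submodule.span_induction with
  | mem _ h =>
    obtain ⟨y, rfl⟩ := h
    rcases eq_or_ne y z with rfl | hyz
    · simp
    · simp [rquot_mul_letter_of_ne hyz, coeff_letter_of_ne hyz]
  | zero => simp
  | add _ _ _ _ h₁ h₂ => simp [mul_add, h₁, h₂, add_smul]
  | smul c _ _ h => simp [h, smul_smul]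

variable {S : Submodule k k[FreeMonoid X]}

lemma lquot_mul_of_mem_mul {a : k[FreeMonoid X]} (ha : a ∈ letters k X * S) (x : X)
    (b : k[FreeMonoid X]) : lquot (FreeMonoid.of x) (a * b) = lquot (FreeMonoid.of x) a * b := by
  induction ha using Submodule.mul_induction_on' with
  | mem_mul_mem g hg c _ =>
    rw [mul_assoc, lquot_mul_of_mem_letters hg, lquot_mul_of_mem_letters hg, smul_mul_assoc]
  | add _ _ _ _ h₁ h₂ => simp [add_mul, h₁, h₂]

lemma lquot_mem_of_mem_mul {a : k[FreeMonoid X]} (ha : a ∈ letters k X * S) (x : X) :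
    lquot (FreeMonoid.of x) a ∈ S := by
  induction ha using Submodule.mul_induction_on' with
  | mem_mul_mem g hg c hc => exact lquot_mul_of_mem_letters hg x c ▸ S.smul_mem _ hc
  | add _ _ _ _ h₁ h₂ => simpa using S.add_mem h₁ h₂

lemma rquot_mul_of_mem_mul {b : k[FreeMonoid X]} (hb : b ∈ S * letters k X) (z : X)
    (a : k[FreeMonoid X]) : rquot (FreeMonoid.of z) (a * b) = a * rquot (FreeMonoid.of z) b := by
  induction hb using Submodule.mul_induction_on' with
  | mem_mul_mem c _ g hg =>
    rw [← mul_assoc, rquot_mul_of_mem_letters hg, rquot_mul_of_mem_letters hg, mul_smul_comm]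
  | add _ _ _ _ h₁ h₂ => simp [mul_add, h₁, h₂]

lemma rquot_mem_of_mem_mul {b : k[FreeMonoid X]} (hb : b ∈ S * letters k X) (z : X) :
    rquot (FreeMonoid.of z) b ∈ S := by
  induction hb using Submodule.mul_induction_on' with
  | mem_mul_mem c hc g hg => exact rquot_mul_of_mem_letters hg z c ▸ S.smul_mem _ hc
  | add _ _ _ _ h₁ h₂ => simpa using S.add_mem h₁ h₂

lemma coeff_one_eq_zero_of_mem_mul {a : k[FreeMonoid X]} (ha : a ∈ letters k X * S) :
    a.coeff 1 = 0 := by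
  induction ha using Submodule.mul_induction_on' with
  | mem_mul_mem g hg c _ =>
    induction hg using Submodule.span_induction with
    | mem _ h =>
      obtain ⟨y, rfl⟩ := h
      exact coeff_single_mul_of_forall_mul_ne _ _ fun d hd => by
        simpa using congrArg FreeMonoid.length hd
    | zero => simp
    | add _ _ _ _ h₁ h₂ => simp [add_mul, h₁, h₂]
    | smul _ _ _ h => simp [h]
  | add _ _ _ _ h₁ h₂ => simp [h₁, h₂]

lemma rquot_mem_of_mem_mul_pow {v : FreeMonoid X} :
    ∀ {r : ℕ} {S : Submodule k k[FreeMonoid X]} {b : k[FreeMonoid X]},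
      b ∈ S * letters k X ^ r → v.length = r → rquot v b ∈ S := by
  induction v using FreeMonoid.inductionOn' with
  | one =>
    intro r S b hb hv
    obtain rfl : r = 0 := by simpa using hv.symm
    simpa using hb
  | of_mul z v ih =>
    intro r S b hb hv
    obtain ⟨r, rfl⟩ : ∃ r', r = r' + 1 := ⟨v.length, by simpa [add_comm] using hv.symm⟩
    rw [pow_succ', ← mul_assoc] at hb
    rw [← rquot_rquot]
    exact rquot_mem_of_mem_mul (ih hb (by simpa [add_comm] using hv)) z

lemma rquot_mul_of_mem_mul_pow {v : FreeMonoid X} (a : k[FreeMonoid X]) :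
    ∀ {r : ℕ} {S : Submodule k k[FreeMonoid X]} {b : k[FreeMonoid X]},
      b ∈ S * letters k X ^ r → v.length = r → rquot v (a * b) = a * rquot v b := by
  induction v using FreeMonoid.inductionOn' with
  | one => simp
  | of_mul z v ih =>
    intro r S b hb hv
    obtain ⟨r, rfl⟩ : ∃ r', r = r' + 1 := ⟨v.length, by simpa [add_comm] using hv.symm⟩
    rw [pow_succ', ← mul_assoc] at hb
    have hv' : v.length = r := by simpa [add_comm] using hv
    rw [← rquot_rquot, ← rquot_rquot, ih hb hv',
      rquot_mul_of_mem_mul (rquot_mem_of_mem_mul_pow hb hv')]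

lemma rquot_mul_of_mem_pow {v : FreeMonoid X} {r : ℕ} {b : k[FreeMonoid X]}
    (hb : b ∈ letters k X ^ r) (hv : v.length = r) (a : k[FreeMonoid X]) :
    rquot v (a * b) = b.coeff v • a := by
  rw [← one_mul (letters k X ^ r)] at hb
  obtain ⟨c, hc⟩ := Submodule.mem_one.mp (rquot_mem_of_mem_mul_pow hb hv)
  have hcv : c = b.coeff v := by simpa using congrArg (coeff · 1) hc
  rw [rquot_mul_of_mem_mul_pow a hb hv, ← hc, hcv, Algebra.algebraMap_eq_smul_one, mul_smul_comm,
    mul_one]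

lemma coeff_eq_zero_of_mem_pow {r : ℕ} {b : k[FreeMonoid X]} {v : FreeMonoid X}
    (hb : b ∈ letters k X ^ r) (hv : v.length ≠ r) : b.coeff v = 0 := by
  induction r generalizing b v with
  | zero =>
    rw [pow_zero, Submodule.mem_one] at hb
    obtain ⟨c, rfl⟩ := hb
    have : v ≠ 1 := by rintro rfl; simp at hv
    simp [MonoidAlgebra.coe_algebraMap, this.symm]
  | succ r ih =>
    rw [pow_succ'] at hb
    cases v using FreeMonoid.casesOn with
    | one => exact coeff_one_eq_zero_of_mem_mul hb
    | of_mul x w =>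
      exact ih (b := lquot (FreeMonoid.of x) b) (lquot_mem_of_mem_mul hb x) (by simp_all [add_comm])

lemma lquot_mul_mul_rquot_mem_of_mul_mul_mem {n : ℕ} {F m : k[FreeMonoid X]}
    {W : Submodule k k[FreeMonoid X]} (hF : F ∈ letters k X ^ (n + 1))
    (h : F * m * F ∈ letters k X * (W * letters k X ^ n)) (x : X) (v : FreeMonoid X)
    (hv : v.length = n) : lquot (FreeMonoid.of x) F * m * rquot v F ∈ W := by
  rw [pow_succ'] at hF
  have h₁ := lquot_mem_of_mem_mul h x
  rw [mul_assoc, lquot_mul_of_mem_mul hF] at h₁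
  have h₂ := rquot_mem_of_mem_mul_pow h₁ hv
  rwa [← mul_assoc, rquot_mul_of_mem_mul_pow _ hF hv] at h₂

lemma exists_coeff_ne_zero_of_mem_pow {r : ℕ} {b : k[FreeMonoid X]} (hb : b ∈ letters k X ^ r)
    (h : b ≠ 0) : ∃ v : FreeMonoid X, v.length = r ∧ b.coeff v ≠ 0 := by
  obtain ⟨v, hv⟩ : ∃ v, b.coeff v ≠ 0 := by
    by_contra! hb0
    exact h (MonoidAlgebra.ext (Finsupp.ext hb0))
  exact ⟨v, by_contra fun hl => hv (coeff_eq_zero_of_mem_pow hb hl), hv⟩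

section Fintype

variable [Fintype X]

lemma eq_sum_of_mem_letters {g : k[FreeMonoid X]} (hg : g ∈ letters k X) :
    g = ∑ x, g.coeff (FreeMonoid.of x) • letter k x := by
  induction hg using Submodule.span_induction with
  | mem _ h =>
    obtain ⟨y, rfl⟩ := h
    rw [Finset.sum_eq_single y (fun x _ hxy => by rw [coeff_letter_of_ne hxy.symm, zero_smul])
      (by simp)]
    simp
  | zero => simp
  | add _ _ _ _ h₁ h₂ =>
    simp only [coeff_add, Finsupp.add_apply, add_smul, Finset.sum_add_distrib, ← h₁, ← h₂]
  | smul c _ _ h =>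
    simp only [coeff_smul, Finsupp.smul_apply, smul_eq_mul, ← smul_smul, ← Finset.smul_sum,
      ← h]

lemma eq_sum_letter_mul_lquot {a : k[FreeMonoid X]} (ha : a ∈ letters k X * S) :
    a = ∑ x, letter k x * lquot (FreeMonoid.of x) a := by
  induction ha using Submodule.mul_induction_on' with
  | mem_mul_mem g hg c _ =>
    simp_rw [lquot_mul_of_mem_letters hg, mul_smul_comm, ← smul_mul_assoc, ← Finset.sum_mul,
      ← eq_sum_of_mem_letters hg]
  | add _ _ _ _ h₁ h₂ =>
    rw [Finset.sum_congr rfl fun x _ => by rw [map_add, mul_add], Finset.sum_add_distrib, ← h₁,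
      ← h₂]

lemma eq_letter_mul_lquot {a : k[FreeMonoid X]} (ha : a ∈ letters k X * S) {y : X}
    (h : ∀ z, z ≠ y → lquot (FreeMonoid.of z) a = 0) :
    a = letter k y * lquot (FreeMonoid.of y) a := by
  calc a = ∑ x, letter k x * lquot (FreeMonoid.of x) a := eq_sum_letter_mul_lquot ha
    _ = _ := Finset.sum_eq_single y (fun z _ hz => by rw [h z hz, mul_zero]) (by simp)

lemma eq_mul_of_forall_lquot_eq_smul {a : k[FreeMonoid X]} (ha : a ∈ letters k X * S)
    (c : X → k) (B : k[FreeMonoid X]) (h : ∀ x, lquot (FreeMonoid.of x) a = c x • B) :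
    a = (∑ x, c x • letter k x) * B :=
  calc a = ∑ x, letter k x * lquot (FreeMonoid.of x) a := eq_sum_letter_mul_lquot ha
    _ = _ := by simp_rw [h, mul_smul_comm, ← smul_mul_assoc, ← Finset.sum_mul]

end Fintype

end CommSemiring

section Field

variable [Field k]

lemma letter_ne_zero (x : X) : letter k x ≠ 0 := by simp [letter]

variable {y z₀ : X} {G : k[FreeMonoid X]}

theorem exists_mul_letter_mul_eq_smul (hzy : z₀ ≠ y) (hG : G ∈ letters k X)
    (hGz : G.coeff (FreeMonoid.of z₀) ≠ 0) {n : ℕ} {q : k[FreeMonoid X]}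
    (hq : q ∈ letters k X ^ n) (hq0 : q ≠ 0)
    (hC : ∀ v : FreeMonoid X, v.length = n + 1 →
      lquot (FreeMonoid.of z₀) (G * (letter k y * q)) * letter k y *
          rquot v (G * (letter k y * q)) ∈
        Submodule.span k {letter k y * (G * (letter k y * q)), G * (letter k y * q) * letter k y}) :
    ∃ c : k, q * letter k y * G = c • (G * letter k y * q) := by
  have hYq : letter k y * q ∈ letters k X ^ (n + 1) := by
    rw [pow_succ']; exact Submodule.mul_mem_mul (Submodule.subset_span ⟨y, rfl⟩) hq
  obtain ⟨v, hv, hδ⟩ :=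
    exists_coeff_ne_zero_of_mem_pow hYq (mul_ne_zero (letter_ne_zero y) hq0)
  have hmem := hC v hv
  rw [lquot_mul_of_mem_letters hG, rquot_mul_of_mem_pow hYq hv, smul_mul_assoc, smul_mul_assoc,
    mul_smul_comm, Submodule.smul_mem_iff _ hGz, Submodule.smul_mem_iff _ hδ] at hmem
  obtain ⟨c, μ, hcμ⟩ := Submodule.mem_span_pair.mp hmem
  -- Of the three terms only `G·y·q·y` has words starting with `z₀`.
  have hμ : μ = 0 := by
    have h := congrArg (lquot (FreeMonoid.of z₀)) hcμ
    simp only [mul_assoc, map_add, map_smul, lquot_letter_mul_of_ne hzy.symm,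
      lquot_mul_of_mem_letters hG, smul_zero, zero_add, smul_smul] at h
    simpa [hGz, letter_ne_zero, hq0] using h
  refine ⟨c, mul_left_cancel₀ (letter_ne_zero y) ?_⟩
  rw [hμ, zero_smul, add_zero] at hcμ
  rw [mul_smul_comm, mul_assoc, mul_assoc, hcμ]
  simp only [mul_assoc]

variable [Fintype X] {S : Submodule k k[FreeMonoid X]}

lemma exists_eq_letter_mul_of_mul_eq_letter_mul {a Q C : k[FreeMonoid X]}
    (ha : a ∈ letters k X * S) (hQ : Q ≠ 0) (h : a * Q = letter k y * C) :
    ∃ a' ∈ S, a = letter k y * a' := by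
  refine ⟨_, lquot_mem_of_mem_mul ha y, eq_letter_mul_lquot ha fun z hz => ?_⟩
  have : lquot (FreeMonoid.of z) a * Q = 0 := by
    rw [← lquot_mul_of_mem_mul ha, h, lquot_letter_mul_of_ne hz.symm]
  exact (mul_eq_zero.mp this).resolve_right hQ

lemma exists_eq_mul_of_mul_eq_smul_mul (hG : G ∈ letters k X)
    (hGz : G.coeff (FreeMonoid.of z₀) ≠ 0) {A : k[FreeMonoid X]} (hA : A ∈ letters k X * S)
    {c : k} (h : A * (G * letter k y) = c • (G * letter k y * A)) :
    ∃ B ∈ S, A = G * B ∧ B * (G * letter k y) = c • (letter k y * A) := by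
  have hP : G * letter k y ≠ 0 :=
    mul_ne_zero (by rintro rfl; simp at hGz) (letter_ne_zero y)
  have hlquot : ∀ z, lquot (FreeMonoid.of z) A * (G * letter k y)
      = (c * G.coeff (FreeMonoid.of z)) • (letter k y * A) := fun z => by
    rw [← lquot_mul_of_mem_mul hA, h, map_smul, mul_assoc, lquot_mul_of_mem_letters hG, smul_smul]
  set B := (G.coeff (FreeMonoid.of z₀))⁻¹ • lquot (FreeMonoid.of z₀) A
  have hBP : B * (G * letter k y) = c • (letter k y * A) := by
    rw [smul_mul_assoc, hlquot, smul_smul, mul_left_comm, inv_mul_cancel₀ hGz, mul_one]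
  have hB : ∀ z, lquot (FreeMonoid.of z) A = G.coeff (FreeMonoid.of z) • B := fun z => by
    refine mul_right_cancel₀ hP ?_
    rw [hlquot, smul_mul_assoc, hBP, smul_smul, mul_comm]
  refine ⟨B, S.smul_mem _ (lquot_mem_of_mem_mul hA z₀), ?_, hBP⟩
  rw [eq_mul_of_forall_lquot_eq_smul hA _ B hB, ← eq_sum_of_mem_letters hG]

lemma exists_eq_mul_letter_mul_of_mul_eq_smul_mul (hG : G ∈ letters k X)
    (hGz : G.coeff (FreeMonoid.of z₀) ≠ 0) {A : k[FreeMonoid X]}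
    (hA : A ∈ letters k X * (letters k X * S)) {c : k}
    (h : A * (G * letter k y) = c • (G * letter k y * A)) :
    ∃ A' ∈ S, A = G * letter k y * A' := by
  have hP : G * letter k y ≠ 0 :=
    mul_ne_zero (by rintro rfl; simp at hGz) (letter_ne_zero y)
  obtain ⟨B, hB, rfl, hBP⟩ := exists_eq_mul_of_mul_eq_smul_mul hG hGz hA h
  obtain ⟨A', hA', rfl⟩ :=
    exists_eq_letter_mul_of_mul_eq_letter_mul hB hP (hBP.trans (mul_smul_comm _ _ _).symm)
  exact ⟨A', hA', (mul_assoc _ _ _).symm⟩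

theorem eq_smul_pow_of_mul_eq_smul_mul (hzy : z₀ ≠ y) (hG : G ∈ letters k X)
    (hGz : G.coeff (FreeMonoid.of z₀) ≠ 0) {c : k} {r : ℕ} {A : k[FreeMonoid X]}
    (hA : A ∈ letters k X ^ r) (hA0 : A ≠ 0)
    (h : A * (G * letter k y) = c • (G * letter k y * A)) :
    ∃ (e : ℕ) (d : k), r = 2 * e ∧ A = d • (G * letter k y) ^ e := by
  induction r using Nat.twoStepInduction generalizing A with
  | zero =>
    rw [pow_zero, Submodule.mem_one] at hA
    obtain ⟨d, rfl⟩ := hA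
    exact ⟨0, d, rfl, by simp [Algebra.algebraMap_eq_smul_one]⟩
  | one =>
    -- `A = d • G` would give `G·y = c·y·G`, impossible as `G` has a first letter `z₀ ≠ y`.
    obtain ⟨B, hB, rfl, hBP⟩ :=
      exists_eq_mul_of_mul_eq_smul_mul (S := 1) hG hGz (by simpa using hA) h
    obtain ⟨d, rfl⟩ := Submodule.mem_one.mp hB
    have := congrArg (lquot (FreeMonoid.of z₀)) hBP
    simp only [Algebra.algebraMap_eq_smul_one, smul_mul_assoc, one_mul, mul_smul_comm, mul_one,
      map_smul, lquot_mul_of_mem_letters hG, lquot_letter_mul_of_ne hzy.symm, smul_zero,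
      smul_eq_zero, letter_ne_zero, hGz, or_false] at this
    simp [this] at hA0
  | more r ih _ =>
    have hP : G * letter k y ≠ 0 :=
      mul_ne_zero (by rintro rfl; simp at hGz) (letter_ne_zero y)
    rw [pow_succ', pow_succ'] at hA
    obtain ⟨A', hA', rfl⟩ := exists_eq_mul_letter_mul_of_mul_eq_smul_mul hG hGz hA h
    have h' : A' * (G * letter k y) = c • (G * letter k y * A') := by
      refine mul_left_cancel₀ hP ?_
      rw [← mul_assoc, h, mul_smul_comm, mul_assoc]
    obtain ⟨e, d, rfl, rfl⟩ := ih hA' (by rintro rfl; simp at hA0) h'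
    exact ⟨e + 1, d, by ring, by rw [mul_smul_comm, ← pow_succ']⟩

theorem eq_smul_letter_pow_of_mul_letter_mul_letter_mem {d : ℕ} {F : k[FreeMonoid X]}
    (hF : F ∈ letters k X ^ d)
    (h : F * letter k y * letter k y ∈
      Submodule.span k {letter k y * (letter k y * F), letter k y * F * letter k y}) :
    ∃ c : k, F = c • letter k y ^ d := by
  induction d generalizing F with
  | zero =>
    rw [pow_zero, Submodule.mem_one] at hF
    obtain ⟨c, rfl⟩ := hF
    exact ⟨c, by simp [Algebra.algebraMap_eq_smul_one]⟩
  | succ d ih =>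
    obtain ⟨a, b, hab⟩ := Submodule.mem_span_pair.mp h
    rw [pow_succ'] at hF
    obtain ⟨F', hF', rfl⟩ := exists_eq_letter_mul_of_mul_eq_letter_mul (y := y) hF
      (mul_ne_zero (letter_ne_zero y) (letter_ne_zero y))
      (C := a • (letter k y * F) + b • (F * letter k y))
      (by rw [← mul_assoc, ← hab]; simp only [mul_add, mul_smul_comm, mul_assoc])
    have h' : F' * letter k y * letter k y =
        a • (letter k y * (letter k y * F')) + b • (letter k y * F' * letter k y) := by
      refine mul_left_cancel₀ (letter_ne_zero (k := k) y) ?_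
      rw [← mul_assoc, ← mul_assoc, ← hab]
      simp only [mul_add, mul_smul_comm, mul_assoc]
    obtain ⟨c, rfl⟩ := ih hF' (Submodule.mem_span_pair.mpr ⟨a, b, h'.symm⟩)
    exact ⟨c, by rw [mul_smul_comm, ← pow_succ']⟩

theorem eq_smul_letter_pow_of_forall_lquot_eq_zero {n : ℕ} {F : k[FreeMonoid X]}
    (hF : F ∈ letters k X ^ (n + 1)) (hF0 : F ≠ 0)
    (hC : ∀ v : FreeMonoid X, v.length = n →
      lquot (FreeMonoid.of y) F * letter k y * rquot v F ∈
        Submodule.span k {letter k y * F, F * letter k y})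
    (h : ∀ z, z ≠ y → lquot (FreeMonoid.of z) F = 0) :
    ∃ c : k, F = c • letter k y ^ (n + 1) := by
  rw [pow_succ'] at hF
  obtain ⟨F₁, hF₁, rfl⟩ : ∃ F₁ ∈ letters k X ^ n, F = letter k y * F₁ :=
    ⟨_, lquot_mem_of_mem_mul hF y, eq_letter_mul_lquot hF h⟩
  obtain ⟨v, hv, hF₁v⟩ := exists_coeff_ne_zero_of_mem_pow hF₁ (by rintro rfl; simp at hF0)
  have hmem := hC v hv
  rw [lquot_letter_mul_self, rquot_mul_of_mem_pow hF₁ hv, mul_smul_comm,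
    Submodule.smul_mem_iff _ hF₁v] at hmem
  obtain ⟨c, rfl⟩ := eq_smul_letter_pow_of_mul_letter_mul_letter_mem hF₁ hmem
  exact ⟨c, by rw [mul_smul_comm, ← pow_succ']⟩

theorem exists_eq_mul_letter_mul_of_lquot_ne_zero {n : ℕ} {F : k[FreeMonoid X]}
    (hF : F ∈ letters k X ^ (n + 2))
    (hC : ∀ (x : X) (v : FreeMonoid X), v.length = n + 1 →
      lquot (FreeMonoid.of x) F * letter k y * rquot v F ∈
        Submodule.span k {letter k y * F, F * letter k y})
    (hzy : z₀ ≠ y) (hz : lquot (FreeMonoid.of z₀) F ≠ 0) :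
    ∃ G ∈ letters k X, ∃ q ∈ letters k X ^ n, F = G * (letter k y * q) := by
  have hFl : F ∈ letters k X * letters k X ^ (n + 1) := by rwa [← pow_succ']
  have hFr : F ∈ letters k X ^ (n + 1) * letters k X := by rwa [← pow_succ]
  obtain ⟨v₀, hv₀, hγ⟩ :=
    exists_coeff_ne_zero_of_mem_pow (lquot_mem_of_mem_mul hFl z₀) hz
  have hg₀ : rquot v₀ F ∈ letters k X := rquot_mem_of_mem_mul_pow hFl hv₀
  have hγ' : (rquot v₀ F).coeff (FreeMonoid.of z₀) ≠ 0 := by simpa using hγ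
  have hR : rquot (FreeMonoid.of z₀) F ∈ letters k X ^ n * letters k X := by
    rw [← pow_succ]; exact rquot_mem_of_mem_mul hFr z₀
  have hx : ∀ x : X, ∃ c : k, lquot (FreeMonoid.of x) F =
      c • (letter k y * rquot (FreeMonoid.of y) (rquot (FreeMonoid.of z₀) F)) := by
    intro x
    obtain ⟨a, b, hab⟩ := Submodule.mem_span_pair.mp (hC x v₀ hv₀)
    have h := congrArg (fun t => rquot (FreeMonoid.of y) (rquot (FreeMonoid.of z₀) t)) hab
    simp only [map_add, map_smul, rquot_mul_of_mem_letters hg₀, rquot_mul_of_mem_mul hFr,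
      rquot_mul_of_mem_mul hR, rquot_mul_letter_of_ne hzy.symm, rquot_mul_letter_self,
      smul_zero, add_zero] at h
    exact ⟨((rquot v₀ F).coeff (FreeMonoid.of z₀))⁻¹ * a, by
      rw [← smul_smul, h, smul_smul, inv_mul_cancel₀ hγ', one_smul]⟩
  choose c hc using hx
  exact ⟨_, Submodule.sum_mem _ fun x _ =>
      Submodule.smul_mem _ _ (Submodule.subset_span ⟨x, rfl⟩),
    _, rquot_mem_of_mem_mul hR y, eq_mul_of_forall_lquot_eq_smul hFl c _ hc⟩

theorem eq_smul_letter_pow_or_eq_smul_pow_mul {n : ℕ} {F : k[FreeMonoid X]}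
    (hF : F ∈ letters k X ^ (n + 2)) (hF0 : F ≠ 0)
    (h : F * letter k y * F ∈ letters k X *
      (Submodule.span k {letter k y * F, F * letter k y} * letters k X ^ (n + 1))) :
    (∃ c : k, F = c • letter k y ^ (n + 2)) ∨
      ∃ G ∈ letters k X, ∃ (e : ℕ) (c : k),
        n + 1 = 2 * e ∧ F = c • ((G * letter k y) ^ e * G) := by
  have hC := lquot_mul_mul_rquot_mem_of_mul_mul_mem hF h
  by_cases hB : ∀ z, z ≠ y → lquot (FreeMonoid.of z) F = 0
  · exact .inl (eq_smul_letter_pow_of_forall_lquot_eq_zero hF hF0 (hC y) hB)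
  push Not at hB
  obtain ⟨z₀, hzy, hz⟩ := hB
  obtain ⟨G, hG, q, hq, rfl⟩ := exists_eq_mul_letter_mul_of_lquot_ne_zero hF hC hzy hz
  have hGz : G.coeff (FreeMonoid.of z₀) ≠ 0 := by
    rw [lquot_mul_of_mem_letters hG] at hz; exact left_ne_zero_of_smul hz
  have hq0 : q ≠ 0 := by rintro rfl; simp at hF0
  obtain ⟨c, hc⟩ := exists_mul_letter_mul_eq_smul hzy hG hGz hq hq0 (hC z₀)
  have hqY : q * letter k y ∈ letters k X ^ (n + 1) := by
    rw [pow_succ]; exact Submodule.mul_mem_mul hq (Submodule.subset_span ⟨y, rfl⟩)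
  obtain ⟨e, d, he, hd⟩ := eq_smul_pow_of_mul_eq_smul_mul hzy hG hGz hqY
    (mul_ne_zero hq0 (letter_ne_zero y)) (c := c)
    (by rw [← mul_assoc, hc, smul_mul_assoc]; simp only [mul_assoc])
  refine .inr ⟨G, hG, e, d, he, mul_right_cancel₀ (letter_ne_zero y) ?_⟩
  calc G * (letter k y * q) * letter k y = G * letter k y * (q * letter k y) := by
        simp only [mul_assoc]
    _ = d • ((G * letter k y) ^ e * G) * letter k y := by
        rw [hd, mul_smul_comm, ← pow_succ', pow_succ, smul_mul_assoc, mul_assoc]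

end Field

end FreeMonoidAlgebra

open FreeMonoidAlgebra

namespace FreeAlgebra

variable {k X : Type} [Field k]

lemma equivMonoidAlgebraFreeMonoid_ι (x : X) :
    equivMonoidAlgebraFreeMonoid (ι k x) = letter k x := by
  simp [equivMonoidAlgebraFreeMonoid, letter]

lemma map_faGens :
    (faGens k X).map (equivMonoidAlgebraFreeMonoid (R := k) (X := X)).toAlgHom.toLinearMap =
      letters k X := by
  rw [faGens, letters, Submodule.map_span, ← Set.range_comp]
  congr 2
  funext x
  exact equivMonoidAlgebraFreeMonoid_ι x

theorem eq_smul_ι_pow_or_eq_smul_pow_mul [Fintype X] {y : X} {n : ℕ} {f : FreeAlgebra k X}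
    (hf : f ∈ faGens k X ^ (n + 2)) (hf0 : f ≠ 0)
    (h : f * ι k y * f ∈ faGens k X *
      (Submodule.span k {ι k y * f, f * ι k y} * faGens k X ^ (n + 1))) :
    (∃ c : k, f = c • ι k y ^ (n + 2)) ∨
      ∃ g ∈ faGens k X, ∃ (e : ℕ) (c : k),
        n + 1 = 2 * e ∧ f = c • ((g * ι k y) ^ e * g) := by
  have hL := map_faGens (k := k) (X := X)
  set Φ := (equivMonoidAlgebraFreeMonoid (R := k) (X := X)).toAlgHom
  have hΦ : Function.Injective Φ := equivMonoidAlgebraFreeMonoid.injective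
  have hι : Φ (ι k y) = letter k y := equivMonoidAlgebraFreeMonoid_ι y
  have hF := Submodule.mem_map_of_mem (f := Φ.toLinearMap) hf
  have hFYF := Submodule.mem_map_of_mem (f := Φ.toLinearMap) h
  simp only [Submodule.map_pow, Submodule.map_mul, Submodule.map_span, hL, Set.image_insert_eq,
    Set.image_singleton, AlgHom.toLinearMap_apply, map_mul] at hF hFYF
  rw [hι] at hFYF
  rcases eq_smul_letter_pow_or_eq_smul_pow_mul hF ((map_ne_zero_iff Φ hΦ).mpr hf0) hFYF with
    ⟨c, hc⟩ | ⟨G, hG, e, c, he, hc⟩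
  · exact .inl ⟨c, hΦ (by simp [hc, hι])⟩
  · rw [← hL] at hG
    obtain ⟨g, hg, rfl⟩ := hG
    exact .inr ⟨g, hg, e, c, he, hΦ (by simp [hc, hι])⟩

end FreeAlgebra

lemma mul_mul_mem_of_eq {R A : Type*} [CommSemiring R] [Semiring A] [Algebra R A]
    {L W : Submodule R A} {n : ℕ} {f y : A} (hf : f ∈ L ^ (n + 2)) (hyf : y * f ∈ W)
    (hfy : f * y ∈ W)
    (heq : W * L ^ (n + 2) ⊓ L * (⨆ i : Fin (n + 2), L ^ (i : ℕ) * W * L ^ (n + 1 - i)) =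
      (W * L ⊓ L * W) * L ^ (n + 1)) :
    f * y * f ∈ L * (W * L ^ (n + 1)) := by
  have hlast : L ^ (n + 1) * W ≤ ⨆ i : Fin (n + 2), L ^ (i : ℕ) * W * L ^ (n + 1 - i) :=
    le_iSup_of_le (Fin.last (n + 1)) (by simp)
  have hfl : f * (y * f) ∈ L * (L ^ (n + 1) * W) := by
    rw [← mul_assoc, ← pow_succ']
    exact Submodule.mul_mem_mul hf hyf
  have hmem : f * y * f ∈ (W * L ⊓ L * W) * L ^ (n + 1) := by
    rw [← heq, mul_assoc]
    exact ⟨mul_assoc f y f ▸ Submodule.mul_mem_mul hfy hf, mul_le_mul_right hlast L hfl⟩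
  exact (mul_assoc L W _).le (mul_le_mul_left (inf_le_right : W * L ⊓ L * W ≤ L * W) _ hmem)

lemma exists_smul_mul_pow_mul_smul_eq {K A : Type*} [Field K] [IsAlgClosed K] [Ring A]
    [Algebra K A] (g y : A) (c : K) (e : ℕ) :
    ∃ ρ : K, (ρ • g * y) ^ e * (ρ • g) = c • ((g * y) ^ e * g) := by
  obtain ⟨ρ, hρ⟩ := IsAlgClosed.exists_pow_nat_eq c e.succ_pos
  exact ⟨ρ, by rw [smul_mul_assoc, smul_pow, smul_mul_smul, ← pow_succ, hρ]⟩

/-- Let `k` be an algebraically closed field, `s > 2`, `m ≥ 0`,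
`F = k⟨x₁,…,x_m,y⟩` (with `y` the generator indexed by `Sum.inr ()`) and `L` the span of
the generators.  Let `f ∈ L^{s−1}` be such that `y·f` and `f·y` are linearly independent
and NOT of the exceptional form (`s = 2t` and `f = (g·y)^{t−1}·g` with `g ∈ L`).  With
`W = span{y·f, f·y}` one has
`W·L^{s−1} ⊓ L·(Σ_{i=0}^{s−2} L^i·W·L^{s−2−i}) ≠ (W·L ⊓ L·W)·L^{s−2}`
(i.e. `F/(W)` fails Berger's extra condition). -/
theorem stmt12 (k : Type) [Field k] [IsAlgClosed k] (s m : ℕ) (hs : 2 < s)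
    (f : FreeAlgebra k (Fin m ⊕ Unit))
    (hf : f ∈ faGens k (Fin m ⊕ Unit) ^ (s - 1))
    (hli : LinearIndependent k
      ![FreeAlgebra.ι k (Sum.inr () : Fin m ⊕ Unit) * f,
        f * FreeAlgebra.ι k (Sum.inr () : Fin m ⊕ Unit)])
    (hnot : ¬ ∃ (t : ℕ) (g : FreeAlgebra k (Fin m ⊕ Unit)),
      g ∈ faGens k (Fin m ⊕ Unit) ∧ s = 2 * t ∧
        f = (g * FreeAlgebra.ι k (Sum.inr () : Fin m ⊕ Unit)) ^ (t - 1) * g) :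
    Submodule.span k
        {FreeAlgebra.ι k (Sum.inr () : Fin m ⊕ Unit) * f,
         f * FreeAlgebra.ι k (Sum.inr () : Fin m ⊕ Unit)} *
          faGens k (Fin m ⊕ Unit) ^ (s - 1) ⊓
        faGens k (Fin m ⊕ Unit) *
          (⨆ i : Fin (s - 1), faGens k (Fin m ⊕ Unit) ^ (i : ℕ) *
            Submodule.span k
              {FreeAlgebra.ι k (Sum.inr () : Fin m ⊕ Unit) * f,
               f * FreeAlgebra.ι k (Sum.inr () : Fin m ⊕ Unit)} *
            faGens k (Fin m ⊕ Unit) ^ (s - 2 - (i : ℕ))) ≠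
      (Submodule.span k
          {FreeAlgebra.ι k (Sum.inr () : Fin m ⊕ Unit) * f,
           f * FreeAlgebra.ι k (Sum.inr () : Fin m ⊕ Unit)} *
            faGens k (Fin m ⊕ Unit) ⊓
          faGens k (Fin m ⊕ Unit) *
            Submodule.span k
              {FreeAlgebra.ι k (Sum.inr () : Fin m ⊕ Unit) * f,
               f * FreeAlgebra.ι k (Sum.inr () : Fin m ⊕ Unit)}) *
        faGens k (Fin m ⊕ Unit) ^ (s - 2) := by
  obtain ⟨n, rfl⟩ : ∃ n, s = n + 3 := ⟨s - 3, by omega⟩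
  simp only [show n + 3 - 1 = n + 2 by omega, show n + 3 - 2 = n + 1 by omega] at hf ⊢
  intro heq
  have hf0 : f ≠ 0 := by
    rintro rfl
    exact hli.ne_zero 0 (by simp)
  rcases FreeAlgebra.eq_smul_ι_pow_or_eq_smul_pow_mul hf hf0 (mul_mul_mem_of_eq hf
      (Submodule.subset_span (by simp)) (Submodule.subset_span (by simp)) heq) with
    ⟨c, rfl⟩ | ⟨g, hg, e, c, he, rfl⟩
  · exact hli.injective.ne (by decide : (0 : Fin 2) ≠ 1) (by simp [pow_mul_comm'])
  · obtain ⟨ρ, hρ⟩ := exists_smul_mul_pow_mul_smul_eq g (FreeAlgebra.ι k (Sum.inr ())) c e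
    exact hnot ⟨e + 1, ρ • g, Submodule.smul_mem _ _ hg, by omega, by simpa using hρ.symm⟩
end
end

section
/- Let k be an algebraically closed field, s > 2, m ≥ 0, F = k⟨x₁,…,x_m,y₁,y₂⟩ the free associative k-algebra, and L the k-span of its generators. Let f ∈ L^{s−1} be homogeneous of degree s−1 and let β, γ ∈ k be nonzero. If β·(y₁·f) + γ·(f·y₂) = v₁·v₂·⋯·v_s for some v₁,…,v_s ∈ L with v₁·v₂·⋯·v_s ≠ 0, then f = α·y₁^p·y₂^{s−1−p} for some α ∈ k and some 0 ≤ p ≤ s−1. -/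
noncomputable section

/-!
Work in `k[FreeMonoid X] ≅ F`, where elements are finitely supported functions on words. Every
word of `β y f + γ f z` starts with `y` or ends with `z`. Write the product as `v₁ M v₂` with
`v₁, v₂` linear. If `v₁ ∉ k y` and `v₂ ∉ k z`, removing the `y`-term of `v₁` and the `z`-term of
`v₂` changes the product only by elements of `y F + F z`, and leaves a product which is nonzero
(`F` is a domain) but has no word starting with `y` or ending with `z`: a contradiction. So, say,
`v₁ ∈ k y`; then `γ f z ∈ y F`, which forces `f = y f'`, and cancelling `y` leaves an equation
of the same shape in degree one less. The case `v₂ ∈ k z` is the mirror image.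
-/

open MonoidAlgebra Set
open scoped Pointwise

namespace FreeMonoid

variable {α : Type*} {a b c d : FreeMonoid α}

theorem eq_of_mul_eq_mul_of_length_eq_left (h : a * b = c * d) (hl : a.length = c.length) :
    a = c :=
  List.append_inj_left h hl

theorem eq_of_mul_eq_mul_of_length_eq_right (h : a * b = c * d) (hl : b.length = d.length) :
    b = d :=
  List.append_inj_right' h hl

theorem exists_eq_mul_of_mul_eq_mul_left (h : a * b = c * d) (hl : c.length ≤ a.length) :
    ∃ e, a = c * e := by
  have ha : a.toList <+: (c * d).toList := by rw [← h]; exact List.prefix_append _ _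
  obtain ⟨e, he⟩ := List.prefix_of_prefix_length_le (List.prefix_append _ _) ha hl
  exact ⟨ofList e, he.symm⟩

theorem exists_eq_mul_of_mul_eq_mul_right (h : a * b = c * d) (hl : d.length ≤ b.length) :
    ∃ e, b = e * d := by
  have hb : b.toList <:+ (c * d).toList := by rw [← h]; exact List.suffix_append _ _
  obtain ⟨e, he⟩ := List.suffix_of_suffix_length_le (List.suffix_append _ _) hb hl
  exact ⟨ofList e, he.symm⟩

theorem disjoint_mul_univ_mul_range_union_range (y z : α) :
    Disjoint (({w | w.length = 1} \ {of y}) * univ * ({w | w.length = 1} \ {of z}))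
      (range (of y * ·) ∪ range (· * of z)) := by
  rw [Set.disjoint_left]
  rintro _ ⟨_, ⟨c, ⟨hc, hcy⟩, u, -, rfl⟩, d, ⟨hd, hdz⟩, rfl⟩ (⟨u', hu'⟩ | ⟨u', hu'⟩)
  · dsimp only at hu'
    rw [mul_assoc] at hu'
    exact hcy (eq_of_mul_eq_mul_of_length_eq_left hu'.symm hc)
  · exact hdz (eq_of_mul_eq_mul_of_length_eq_right hu'.symm hd)

end FreeMonoid

namespace MonoidAlgebra

variable {R M : Type*}

section CommSemiring

variable [CommSemiring R]

theorem single_mem_supported {s : Set M} {m : M} (r : R) (hm : m ∈ s) :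
    single m r ∈ supported R R s :=
  Finsupp.single_mem_supported R r hm

theorem eq_zero_of_mem_supported_of_disjoint {s t : Set M} (hst : Disjoint s t) {a : R[M]}
    (hs : a ∈ supported R R s) (ht : a ∈ supported R R t) : a = 0 := by
  rw [mem_supported'] at hs ht
  refine MonoidAlgebra.ext (Finsupp.ext fun w => ?_)
  by_cases hw : w ∈ s
  · exact ht w (hst.notMem_of_mem_left hw)
  · exact hs w hw

variable [Monoid M]

theorem supported_mul_supported_le (s t : Set M) :
    supported R R s * supported R R t ≤ supported R R (s * t) := by
  classical
  refine Submodule.mul_le.2 fun a ha b hb => ?_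
  rw [mem_supported] at ha hb ⊢
  refine (Finset.coe_subset.2 (support_coeff_mul_subset a b)).trans ?_
  rw [Finset.coe_mul]
  exact mul_subset_mul ha hb

theorem mem_supported_range_mul_left_iff {m : M} {a : R[M]} :
    a ∈ supported R R (range (m * ·)) ↔ ∃ b, a = single m 1 * b := by
  classical
  constructor
  · intro ha
    rw [supported_eq_span_single] at ha
    have hle : Submodule.span R ((fun u => single u (1 : R)) '' range (m * ·)) ≤
        LinearMap.range (LinearMap.mulLeft R (single m (1 : R))) := by
      rw [Submodule.span_le]
      rintro _ ⟨_, ⟨u, rfl⟩, rfl⟩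
      exact ⟨single u 1, by simp [single_mul_single]⟩
    obtain ⟨b, rfl⟩ := hle ha
    exact ⟨b, rfl⟩
  · rintro ⟨b, rfl⟩
    rw [mem_supported]
    refine (Finset.coe_subset.2 (support_coeff_single_mul_subset b 1 m)).trans ?_
    rw [Finset.coe_image]
    exact image_subset_range _ _

theorem mem_supported_range_mul_right_iff {m : M} {a : R[M]} :
    a ∈ supported R R (range (· * m)) ↔ ∃ b, a = b * single m 1 := by
  classical
  constructor
  · intro ha
    rw [supported_eq_span_single] at ha
    have hle : Submodule.span R ((fun u => single u (1 : R)) '' range (· * m)) ≤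
        LinearMap.range (LinearMap.mulRight R (single m (1 : R))) := by
      rw [Submodule.span_le]
      rintro _ ⟨_, ⟨u, rfl⟩, rfl⟩
      exact ⟨single u 1, by simp [single_mul_single]⟩
    obtain ⟨b, rfl⟩ := hle ha
    exact ⟨b, rfl⟩
  · rintro ⟨b, rfl⟩
    rw [mem_supported]
    refine (Finset.coe_subset.2 (support_coeff_mul_single_subset b 1 m)).trans ?_
    rw [Finset.coe_image]
    exact image_subset_range _ _

end CommSemiring

theorem sub_coeff_smul_single_mem_supported_diff [CommRing R] {s : Set M} {a : R[M]}
    (ha : a ∈ supported R R s) (m : M) :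
    a - a.coeff m • single m 1 ∈ supported R R (s \ {m}) := by
  classical
  rw [mem_supported'] at ha ⊢
  intro w hw
  by_cases hwm : w = m
  · subst hwm
    simp
  · have hws : w ∉ s := fun h => hw ⟨h, hwm⟩
    simp [ha w hws, Ne.symm hwm]

end MonoidAlgebra

section FreeMonoidAlgebra

variable {k X : Type*}

variable (k X) in
noncomputable abbrev homogeneousComponent [CommSemiring k] (n : ℕ) :
    Submodule k k[FreeMonoid X] :=
  supported k k {w | w.length = n}

local notation "ℓ" x:max => MonoidAlgebra.single (FreeMonoid.of x) 1

section CommSemiring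

variable [CommSemiring k]

theorem span_single_of_pow_le_homogeneousComponent (n : ℕ) :
    Submodule.span k (range fun x : X => (ℓ x : k[FreeMonoid X])) ^ n ≤
      homogeneousComponent k X n := by
  induction n with
  | zero =>
    rw [pow_zero, Submodule.one_le, one_def]
    exact single_mem_supported 1 FreeMonoid.length_one
  | succ n ih =>
    rw [pow_succ]
    refine (mul_le_mul' ih (?_ : _ ≤ homogeneousComponent k X 1)).trans
      ((supported_mul_supported_le _ _).trans (supported_mono ?_))
    · rw [Submodule.span_le]
      rintro _ ⟨x, rfl⟩
      exact single_mem_supported 1 (FreeMonoid.length_of x)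
    · rintro _ ⟨u, hu, w, hw, rfl⟩
      simp_all [FreeMonoid.length_mul]

theorem eq_coeff_one_smul_one_of_mem_homogeneousComponent_zero {g : k[FreeMonoid X]}
    (hg : g ∈ homogeneousComponent k X 0) : g = g.coeff 1 • 1 := by
  rw [mem_supported'] at hg
  refine MonoidAlgebra.ext (Finsupp.ext fun w => ?_)
  by_cases hw : w = 1
  · subst hw
    simp [one_def]
  · rw [hg w (mt FreeMonoid.length_eq_zero.1 hw)]
    simp [one_def, Finsupp.single_eq_of_ne hw]

theorem mem_homogeneousComponent_of_single_mul_mem {y : X} {n : ℕ} {g : k[FreeMonoid X]}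
    (h : ℓ y * g ∈ homogeneousComponent k X (n + 1)) : g ∈ homogeneousComponent k X n := by
  rw [mem_supported'] at h ⊢
  intro u hu
  simpa using h (FreeMonoid.of y * u) (by simp_all [FreeMonoid.length_mul]; omega)

theorem mem_homogeneousComponent_of_mul_single_mem {z : X} {n : ℕ} {g : k[FreeMonoid X]}
    (h : g * ℓ z ∈ homogeneousComponent k X (n + 1)) : g ∈ homogeneousComponent k X n := by
  rw [mem_supported'] at h ⊢
  intro u hu
  simpa using h (u * FreeMonoid.of z) (by simp_all [FreeMonoid.length_mul])

theorem exists_eq_single_mul_of_mul_single_mem {y z : X} {n : ℕ} {g : k[FreeMonoid X]}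
    (hg : g ∈ homogeneousComponent k X (n + 1))
    (h : g * ℓ z ∈ supported k k (range (FreeMonoid.of y * ·))) :
    ∃ g' ∈ homogeneousComponent k X n, g = ℓ y * g' := by
  have hgy : g ∈ supported k k (range (FreeMonoid.of y * ·)) := by
    rw [mem_supported'] at h ⊢
    intro w hw
    by_contra hgw
    have hlen : w.length = n + 1 := hg (Finsupp.mem_support_iff.2 hgw)
    have hwz : w * FreeMonoid.of z ∉ range (FreeMonoid.of y * ·) := by
      rintro ⟨u, hu⟩
      obtain ⟨e, rfl⟩ := FreeMonoid.exists_eq_mul_of_mul_eq_mul_left hu.symm (by simp [hlen])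
      exact hw ⟨e, rfl⟩
    exact hgw (by simpa using h _ hwz)
  obtain ⟨g', rfl⟩ := mem_supported_range_mul_left_iff.1 hgy
  exact ⟨g', mem_homogeneousComponent_of_single_mul_mem hg, rfl⟩

theorem exists_eq_mul_single_of_single_mul_mem {y z : X} {n : ℕ} {g : k[FreeMonoid X]}
    (hg : g ∈ homogeneousComponent k X (n + 1))
    (h : ℓ y * g ∈ supported k k (range (· * FreeMonoid.of z))) :
    ∃ g' ∈ homogeneousComponent k X n, g = g' * ℓ z := by
  have hgz : g ∈ supported k k (range (· * FreeMonoid.of z)) := by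
    rw [mem_supported'] at h ⊢
    intro w hw
    by_contra hgw
    have hlen : w.length = n + 1 := hg (Finsupp.mem_support_iff.2 hgw)
    have hyw : FreeMonoid.of y * w ∉ range (· * FreeMonoid.of z) := by
      rintro ⟨u, hu⟩
      obtain ⟨e, rfl⟩ := FreeMonoid.exists_eq_mul_of_mul_eq_mul_right hu.symm (by simp [hlen])
      exact hw ⟨e, rfl⟩
    exact hgw (by simpa using h _ hyw)
  obtain ⟨g', rfl⟩ := mem_supported_range_mul_right_iff.1 hgz
  exact ⟨g', mem_homogeneousComponent_of_mul_single_mem hg, rfl⟩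

end CommSemiring

variable [Field k]

theorem exists_of_smul_add_smul_eq_single_mul {y z : X} {β γ : k} (hγ : γ ≠ 0) {n : ℕ}
    {g Q : k[FreeMonoid X]} (hg : g ∈ homogeneousComponent k X (n + 1))
    (h : β • (ℓ y * g) + γ • (g * ℓ z) = ℓ y * Q) :
    ∃ g' ∈ homogeneousComponent k X n, g = ℓ y * g' ∧ β • (ℓ y * g') + γ • (g' * ℓ z) = Q := by
  have hgz : g * ℓ z = ℓ y * (γ⁻¹ • (Q - β • g)) := by
    rw [mul_smul_comm, mul_sub, mul_smul_comm, ← h, add_sub_cancel_left, smul_smul,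
      inv_mul_cancel₀ hγ, one_smul]
  obtain ⟨g', hg', rfl⟩ :=
    exists_eq_single_mul_of_mul_single_mem hg (mem_supported_range_mul_left_iff.2 ⟨_, hgz⟩)
  refine ⟨g', hg', rfl, mul_left_cancel₀ (a := ℓ y) (single_ne_zero.2 one_ne_zero) ?_⟩
  rw [← h, mul_add, mul_smul_comm, mul_smul_comm, mul_assoc]

theorem exists_of_smul_add_smul_eq_mul_single {y z : X} {β γ : k} (hβ : β ≠ 0) {n : ℕ}
    {g Q : k[FreeMonoid X]} (hg : g ∈ homogeneousComponent k X (n + 1))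
    (h : β • (ℓ y * g) + γ • (g * ℓ z) = Q * ℓ z) :
    ∃ g' ∈ homogeneousComponent k X n, g = g' * ℓ z ∧ β • (ℓ y * g') + γ • (g' * ℓ z) = Q := by
  have hyg : ℓ y * g = (β⁻¹ • (Q - γ • g)) * ℓ z := by
    rw [smul_mul_assoc, sub_mul, smul_mul_assoc, ← h, add_sub_cancel_right, smul_smul,
      inv_mul_cancel₀ hβ, one_smul]
  obtain ⟨g', hg', rfl⟩ :=
    exists_eq_mul_single_of_single_mul_mem hg (mem_supported_range_mul_right_iff.2 ⟨_, hyg⟩)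
  refine ⟨g', hg', rfl, mul_right_cancel₀ (b := ℓ z) (single_ne_zero.2 one_ne_zero) ?_⟩
  rw [← h, add_mul, smul_mul_assoc, smul_mul_assoc, mul_assoc]

theorem eq_coeff_smul_single_or_eq_coeff_smul_single {y z : X} {v₁ M v₂ : k[FreeMonoid X]}
    (hv₁ : v₁ ∈ homogeneousComponent k X 1) (hv₂ : v₂ ∈ homogeneousComponent k X 1) (hM : M ≠ 0)
    (h : v₁ * M * v₂ ∈
      supported k k (range (FreeMonoid.of y * ·) ∪ range (· * FreeMonoid.of z))) :
    v₁ = v₁.coeff (FreeMonoid.of y) • ℓ y ∨ v₂ = v₂.coeff (FreeMonoid.of z) • ℓ z := by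
  by_contra! hne
  set a := v₁.coeff (FreeMonoid.of y)
  set b := v₂.coeff (FreeMonoid.of z)
  have hsplit : (v₁ - a • ℓ y) * M * (v₂ - b • ℓ z) =
      v₁ * M * v₂ - a • (ℓ y * (M * v₂)) - b • ((v₁ - a • ℓ y) * M * ℓ z) := by
    simp only [sub_mul, mul_sub, smul_mul_assoc, mul_smul_comm, mul_assoc]
  have hS : (v₁ - a • ℓ y) * M * (v₂ - b • ℓ z) ∈
      supported k k (range (FreeMonoid.of y * ·) ∪ range (· * FreeMonoid.of z)) := by
    rw [hsplit]
    refine sub_mem (sub_mem h (Submodule.smul_mem _ _ ?_)) (Submodule.smul_mem _ _ ?_)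
    · exact supported_mono subset_union_left (mem_supported_range_mul_left_iff.2 ⟨_, rfl⟩)
    · exact supported_mono subset_union_right (mem_supported_range_mul_right_iff.2 ⟨_, rfl⟩)
  have hT : (v₁ - a • ℓ y) * M * (v₂ - b • ℓ z) ∈ supported k k
      (({w | w.length = 1} \ {FreeMonoid.of y}) * univ *
        ({w | w.length = 1} \ {FreeMonoid.of z})) :=
    supported_mul_supported_le _ _ <| Submodule.mul_mem_mul
      (supported_mul_supported_le _ _ <| Submodule.mul_mem_mul
        (sub_coeff_smul_single_mem_supported_diff hv₁ _) (mem_supported.2 (subset_univ _)))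
      (sub_coeff_smul_single_mem_supported_diff hv₂ _)
  exact mul_ne_zero (mul_ne_zero (sub_ne_zero.2 hne.1) hM) (sub_ne_zero.2 hne.2)
    (eq_zero_of_mem_supported_of_disjoint
      (FreeMonoid.disjoint_mul_univ_mul_range_union_range y z) hT hS)

theorem exists_eq_single_mul_or_exists_eq_mul_single {y z : X} {n : ℕ} {P : k[FreeMonoid X]}
    (hP : P ∈ (homogeneousComponent k X 1 : Set k[FreeMonoid X]) ^ (n + 2))
    (hPS : P ∈ supported k k (range (FreeMonoid.of y * ·) ∪ range (· * FreeMonoid.of z))) :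
    (∃ Q ∈ (homogeneousComponent k X 1 : Set k[FreeMonoid X]) ^ (n + 1), P = ℓ y * Q) ∨
      ∃ Q ∈ (homogeneousComponent k X 1 : Set k[FreeMonoid X]) ^ (n + 1), P = Q * ℓ z := by
  set L := (homogeneousComponent k X 1 : Set k[FreeMonoid X])
  rw [pow_succ', pow_succ, Set.mem_mul] at hP
  obtain ⟨v₁, hv₁, _, hMv, rfl⟩ := hP
  obtain ⟨M, hM, v₂, hv₂, rfl⟩ := Set.mem_mul.1 hMv
  rw [← mul_assoc] at hPS
  by_cases hM0 : M = 0
  · exact .inl ⟨M * v₂, pow_succ L n ▸ mul_mem_mul hM hv₂, by simp [hM0]⟩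
  rcases eq_coeff_smul_single_or_eq_coeff_smul_single hv₁ hv₂ hM0 hPS with hy | hz
  · refine .inl ⟨M * (v₁.coeff (FreeMonoid.of y) • v₂),
      pow_succ L n ▸ mul_mem_mul hM (Submodule.smul_mem _ _ hv₂), ?_⟩
    conv_lhs => rw [hy]
    rw [smul_mul_assoc, mul_smul_comm, mul_smul_comm]
  · refine .inr ⟨(v₂.coeff (FreeMonoid.of z) • v₁) * M,
      pow_succ' L n ▸ mul_mem_mul (Submodule.smul_mem _ _ hv₁) hM, ?_⟩
    conv_lhs => rw [hz]
    rw [mul_smul_comm, mul_smul_comm, smul_mul_assoc, smul_mul_assoc, mul_assoc]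

theorem eq_smul_single_pow_mul_single_pow_of_mem_pow {y z : X} {β γ : k} (hβ : β ≠ 0)
    (hγ : γ ≠ 0) {n : ℕ} {g : k[FreeMonoid X]} (hg : g ∈ homogeneousComponent k X n)
    (hP : β • (ℓ y * g) + γ • (g * ℓ z) ∈
      (homogeneousComponent k X 1 : Set k[FreeMonoid X]) ^ (n + 1)) :
    ∃ (α : k) (p : ℕ), p ≤ n ∧ g = α • (ℓ y ^ p * ℓ z ^ (n - p)) := by
  induction n generalizing g with
  | zero =>
    refine ⟨g.coeff 1, 0, le_rfl, ?_⟩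
    simpa using eq_coeff_one_smul_one_of_mem_homogeneousComponent_zero hg
  | succ n ih =>
    have hS : β • (ℓ y * g) + γ • (g * ℓ z) ∈
        supported k k (range (FreeMonoid.of y * ·) ∪ range (· * FreeMonoid.of z)) :=
      add_mem
        (Submodule.smul_mem _ _ <| supported_mono subset_union_left <|
          mem_supported_range_mul_left_iff.2 ⟨g, rfl⟩)
        (Submodule.smul_mem _ _ <| supported_mono subset_union_right <|
          mem_supported_range_mul_right_iff.2 ⟨g, rfl⟩)
    rcases exists_eq_single_mul_or_exists_eq_mul_single hP hS with ⟨Q, hQ, hPQ⟩ | ⟨Q, hQ, hPQ⟩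
    · obtain ⟨g', hg', rfl, rfl⟩ := exists_of_smul_add_smul_eq_single_mul hγ hg hPQ
      obtain ⟨α, p, hp, rfl⟩ := ih hg' hQ
      refine ⟨α, p + 1, by omega, ?_⟩
      rw [mul_smul_comm, ← mul_assoc, ← pow_succ', Nat.add_sub_add_right]
    · obtain ⟨g', hg', rfl, rfl⟩ := exists_of_smul_add_smul_eq_mul_single hβ hg hPQ
      obtain ⟨α, p, hp, rfl⟩ := ih hg' hQ
      refine ⟨α, p, by omega, ?_⟩
      rw [smul_mul_assoc, mul_assoc, ← pow_succ, Nat.sub_add_comm hp]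

end FreeMonoidAlgebra

theorem FreeAlgebra.equivMonoidAlgebraFreeMonoid_ι_s13 {R X : Type*} [CommSemiring R] (x : X) :
    equivMonoidAlgebraFreeMonoid (ι R x) = single (FreeMonoid.of x) 1 := by
  simp [equivMonoidAlgebraFreeMonoid]

section FreeAlgebra

variable {k X : Type} [Field k]

theorem equivMonoidAlgebraFreeMonoid_mem_homogeneousComponent {n : ℕ} {f : FreeAlgebra k X}
    (hf : f ∈ faGens k X ^ n) :
    FreeAlgebra.equivMonoidAlgebraFreeMonoid f ∈ homogeneousComponent k X n := by
  have hmap := Submodule.mem_map_of_mem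
    (f := (FreeAlgebra.equivMonoidAlgebraFreeMonoid (R := k) (X := X)).toAlgHom.toLinearMap) hf
  rw [Submodule.map_pow, faGens, Submodule.map_span, ← range_comp] at hmap
  have hι : ⇑(FreeAlgebra.equivMonoidAlgebraFreeMonoid (R := k) (X := X)).toAlgHom.toLinearMap ∘
      FreeAlgebra.ι k = fun x => single (FreeMonoid.of x) 1 :=
    funext FreeAlgebra.equivMonoidAlgebraFreeMonoid_ι_s13
  rw [hι] at hmap
  exact span_single_of_pow_le_homogeneousComponent n hmap

theorem eq_smul_ι_pow_mul_ι_pow_of_mem_pow {y z : X} {β γ : k} (hβ : β ≠ 0) (hγ : γ ≠ 0)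
    {n : ℕ} {f : FreeAlgebra k X} (hf : f ∈ faGens k X ^ n)
    (hP : β • (FreeAlgebra.ι k y * f) + γ • (f * FreeAlgebra.ι k z) ∈
      (faGens k X : Set (FreeAlgebra k X)) ^ (n + 1)) :
    ∃ (α : k) (p : ℕ), p ≤ n ∧
      f = α • (FreeAlgebra.ι k y ^ p * FreeAlgebra.ι k z ^ (n - p)) := by
  set e := FreeAlgebra.equivMonoidAlgebraFreeMonoid (R := k) (X := X)
  have he : ∀ x, e (FreeAlgebra.ι k x) = single (FreeMonoid.of x) 1 :=
    FreeAlgebra.equivMonoidAlgebraFreeMonoid_ι_s13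
  have hL : e '' faGens k X ⊆ homogeneousComponent k X 1 := by
    rintro _ ⟨a, ha, rfl⟩
    exact equivMonoidAlgebraFreeMonoid_mem_homogeneousComponent (by rwa [pow_one])
  have hP' := Set.pow_subset_pow_left hL (Set.image_pow e _ _ ▸ Set.mem_image_of_mem e hP)
  rw [map_add, map_smul, map_smul, map_mul, map_mul, he, he] at hP'
  obtain ⟨α, p, hp, h⟩ := eq_smul_single_pow_mul_single_pow_of_mem_pow hβ hγ
    (equivMonoidAlgebraFreeMonoid_mem_homogeneousComponent hf) hP'
  refine ⟨α, p, hp, e.injective ?_⟩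
  rw [map_smul, map_mul, map_pow, map_pow, he, he]
  exact h

end FreeAlgebra

theorem stmt13_general (k : Type) [Field k] (s m : ℕ) (hs : 2 < s)
    (f : FreeAlgebra k (Fin m ⊕ Fin 2))
    (hf : f ∈ faGens k (Fin m ⊕ Fin 2) ^ (s - 1))
    (β γ : k) (hβ : β ≠ 0) (hγ : γ ≠ 0)
    (v : Fin s → FreeAlgebra k (Fin m ⊕ Fin 2))
    (hv : ∀ i, v i ∈ faGens k (Fin m ⊕ Fin 2))
    (heq : β • (FreeAlgebra.ι k (Sum.inr 0 : Fin m ⊕ Fin 2) * f) +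
        γ • (f * FreeAlgebra.ι k (Sum.inr 1 : Fin m ⊕ Fin 2)) = (List.ofFn v).prod) :
    ∃ (α : k) (p : ℕ), p ≤ s - 1 ∧
      f = α • (FreeAlgebra.ι k (Sum.inr 0 : Fin m ⊕ Fin 2) ^ p *
        FreeAlgebra.ι k (Sum.inr 1 : Fin m ⊕ Fin 2) ^ (s - 1 - p)) := by
  obtain ⟨n, rfl⟩ : ∃ n, s = n + 1 := ⟨s - 1, by omega⟩
  rw [Nat.add_sub_cancel] at hf ⊢
  exact eq_smul_ι_pow_mul_ι_pow_of_mem_pow hβ hγ hf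
    (heq ▸ Set.mem_pow.2 ⟨fun i => ⟨v i, hv i⟩, rfl⟩)

/-- Let `k` be an algebraically closed field, `s > 2`, `m ≥ 0`,
`F = k⟨x₁,…,x_m,y₁,y₂⟩` (with `y₁, y₂` the generators indexed by `Sum.inr 0, Sum.inr 1`)
and `L` the span of the generators.  Let `f ∈ L^{s−1}` and let `β, γ ∈ k` be nonzero.
If `β·(y₁·f) + γ·(f·y₂)` is a nonzero product `v₁·v₂·⋯·v_s` of degree-one elements,
then `f = α·y₁^p·y₂^{s−1−p}` for some `α ∈ k` and some `0 ≤ p ≤ s−1`. -/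
theorem stmt13 (k : Type) [Field k] [IsAlgClosed k] (s m : ℕ) (hs : 2 < s)
    (f : FreeAlgebra k (Fin m ⊕ Fin 2))
    (hf : f ∈ faGens k (Fin m ⊕ Fin 2) ^ (s - 1))
    (β γ : k) (hβ : β ≠ 0) (hγ : γ ≠ 0)
    (v : Fin s → FreeAlgebra k (Fin m ⊕ Fin 2))
    (hv : ∀ i, v i ∈ faGens k (Fin m ⊕ Fin 2))
    (heq : β • (FreeAlgebra.ι k (Sum.inr 0 : Fin m ⊕ Fin 2) * f) +
        γ • (f * FreeAlgebra.ι k (Sum.inr 1 : Fin m ⊕ Fin 2)) = (List.ofFn v).prod)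
    (hne : (List.ofFn v).prod ≠ 0) :
    ∃ (α : k) (p : ℕ), p ≤ s - 1 ∧
      f = α • (FreeAlgebra.ι k (Sum.inr 0 : Fin m ⊕ Fin 2) ^ p *
        FreeAlgebra.ι k (Sum.inr 1 : Fin m ⊕ Fin 2) ^ (s - 1 - p)) :=
  stmt13_general k s m hs f hf β γ hβ hγ v hv heq

end
end
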